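/- arXiv:math/0508389 — 4 statements merged into one kernel-verified Lean document; each statement's English description precedes it below -/
import Mathlib

section
/- Let n ≥ 5 be an integer and q = (n+4)/(n-4). There do not exist continuous functions u, w : [0,∞) → ℝ with w(r) ≥ 0 for all r ≥ 0 and u(0) < 0 such that for every r ≥ 0 both u(r) ≤ u(0) − ∫₀^r s^{1−n} (∫₀^s t^{n−1} w(t)^q dt) ds and w(r) ≥ w(0) − ∫₀^r s^{1−n} (∫₀^s t^{n−1} u(t) dt) ds hold. -/
/-!
Since `u ≤ u 0 < 0`, the second inequality gives `w ≥ c r²`. A lower bound `w ≥ C r^b` passes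
through the first inequality to `u ≤ -C' r^(qb+2)` and back through the second one to
`w ≥ C^q / D(b) · r^(qb+4)`, where `D(b)` is a quartic polynomial in `b`. Iterating from
`b = 2`, the exponents `a_k` grow like `q^k`, so `D(a_k) ≤ A K^k`, and at a fixed radius `R ≥ 1`
the values `x_k = c_k R^(a_k)` obey `x_{k+1} ≥ x_k^q / (A K^k)`. Since `q > 1`, such a sequence
tends to infinity once `x_0` is large, which `R` large ensures; but every `x_k` is at most `w R`.
-/

open MeasureTheory Filter Set intervalIntegral

noncomputable def radialPotential (ν : ℝ) (f : ℝ → ℝ) (r : ℝ) : ℝ :=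
  ∫ s in (0:ℝ)..r, s ^ (1 - ν) * ∫ t in (0:ℝ)..s, t ^ (ν - 1) * f t

section RadialPotential

variable {ν : ℝ} {f g : ℝ → ℝ} {r : ℝ}

lemma continuousOn_const_mul_rpow (K : ℝ) {b : ℝ} (hb : 0 ≤ b) :
    ContinuousOn (fun t : ℝ => K * t ^ b) (Ici 0) :=
  (continuous_const.mul (Real.continuous_rpow_const hb)).continuousOn

lemma intervalIntegrable_rpow_mul (hν : 1 ≤ ν) (hf : ContinuousOn f (Ici 0)) (hr : 0 ≤ r) :
    IntervalIntegrable (fun t => t ^ (ν - 1) * f t) volume 0 r := by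
  refine ContinuousOn.intervalIntegrable ?_
  rw [uIcc_of_le hr]
  exact (Real.continuous_rpow_const (by linarith)).continuousOn.mul
    (hf.mono Icc_subset_Ici_self)

lemma abs_integral_rpow_mul_le (hν : 0 < ν) (hr : 0 ≤ r)
    {M : ℝ} (hM : ∀ t ∈ Icc 0 r, |f t| ≤ M) :
    |∫ t in (0:ℝ)..r, t ^ (ν - 1) * f t| ≤ M * r ^ ν / ν := by
  have hbound : ∀ t ∈ Ioc 0 r, ‖t ^ (ν - 1) * f t‖ ≤ M * t ^ (ν - 1) := fun t ht => by
    rw [Real.norm_eq_abs, abs_mul, abs_of_nonneg (Real.rpow_nonneg ht.1.le _), mul_comm]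
    exact mul_le_mul_of_nonneg_right (hM t (Ioc_subset_Icc_self ht)) (Real.rpow_nonneg ht.1.le _)
  have hint : IntervalIntegrable (fun t : ℝ => M * t ^ (ν - 1)) volume 0 r :=
    (intervalIntegrable_rpow' (by linarith)).const_mul M
  calc |∫ t in (0:ℝ)..r, t ^ (ν - 1) * f t|
      ≤ ∫ t in (0:ℝ)..r, M * t ^ (ν - 1) :=
        norm_integral_le_of_norm_le hr (Eventually.of_forall hbound) hint
    _ = M * r ^ ν / ν := by
        rw [intervalIntegral.integral_const_mul, integral_rpow (Or.inl (by linarith)),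
          Real.zero_rpow (by linarith), sub_add_cancel]
        ring

lemma intervalIntegrable_radialPotential_integrand (hν : 1 ≤ ν) (hf : ContinuousOn f (Ici 0))
    (hr : 0 ≤ r) :
    IntervalIntegrable (fun s => s ^ (1 - ν) * ∫ t in (0:ℝ)..s, t ^ (ν - 1) * f t) volume 0 r := by
  obtain ⟨M, hM⟩ := isCompact_Icc.exists_bound_of_continuousOn
    (hf.mono (Icc_subset_Ici_self : Icc 0 r ⊆ Ici 0))
  have hprim : ContinuousOn (fun s => ∫ t in (0:ℝ)..s, t ^ (ν - 1) * f t) (Icc 0 r) := by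
    simpa only [uIcc_of_le hr] using
      continuousOn_primitive_interval' (intervalIntegrable_rpow_mul hν hf hr) left_mem_uIcc
  have hdom : IntervalIntegrable (fun s : ℝ => M / ν * s) volume 0 r :=
    (continuous_const.mul continuous_id).intervalIntegrable 0 r
  refine hdom.mono_fun ?_ ?_
  · rw [uIoc_of_le hr]
    refine ContinuousOn.aestronglyMeasurable (fun s hs => ?_) measurableSet_Ioc
    exact ((Real.continuousAt_rpow_const s _ (Or.inl hs.1.ne')).continuousWithinAt).mul
      (hprim.mono Ioc_subset_Icc_self s hs)
  · rw [uIoc_of_le hr]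
    filter_upwards [ae_restrict_mem measurableSet_Ioc] with s hs
    have hs0 : 0 < s := hs.1
    rw [Real.norm_eq_abs, Real.norm_eq_abs, abs_mul, abs_of_nonneg (Real.rpow_nonneg hs0.le _)]
    calc s ^ (1 - ν) * |∫ t in (0:ℝ)..s, t ^ (ν - 1) * f t|
        ≤ s ^ (1 - ν) * (M * s ^ ν / ν) :=
          mul_le_mul_of_nonneg_left (abs_integral_rpow_mul_le (by linarith) hs0.le
            fun t ht => by simpa using hM t ⟨ht.1, ht.2.trans hs.2⟩) (by positivity)
      _ = M / ν * s := by
          rw [mul_div_assoc', mul_left_comm, ← Real.rpow_add hs0, sub_add_cancel, Real.rpow_one]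
          ring
      _ ≤ |M / ν * s| := le_abs_self _

lemma radialPotential_mono (hν : 1 ≤ ν) (hf : ContinuousOn f (Ici 0))
    (hg : ContinuousOn g (Ici 0)) (hfg : ∀ t, 0 ≤ t → f t ≤ g t) (hr : 0 ≤ r) :
    radialPotential ν f r ≤ radialPotential ν g r := by
  refine integral_mono_on hr (intervalIntegrable_radialPotential_integrand hν hf hr)
    (intervalIntegrable_radialPotential_integrand hν hg hr) fun s hs => ?_
  refine mul_le_mul_of_nonneg_left ?_ (Real.rpow_nonneg hs.1 _)
  exact integral_mono_on hs.1 (intervalIntegrable_rpow_mul hν hf hs.1)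
    (intervalIntegrable_rpow_mul hν hg hs.1)
    fun t ht => mul_le_mul_of_nonneg_left (hfg t ht.1) (Real.rpow_nonneg ht.1 _)

lemma radialPotential_nonneg (hf : ∀ t, 0 ≤ t → 0 ≤ f t) (hr : 0 ≤ r) :
    0 ≤ radialPotential ν f r :=
  integral_nonneg hr fun _ hs => mul_nonneg (Real.rpow_nonneg hs.1 _) <|
    integral_nonneg hs.1 fun t ht => mul_nonneg (Real.rpow_nonneg ht.1 _) (hf t ht.1)

lemma radialPotential_const_mul_rpow (hν : 1 ≤ ν) (K : ℝ) {b : ℝ} (hb : 0 ≤ b) (hr : 0 ≤ r) :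
    radialPotential ν (fun t => K * t ^ b) r = K / ((ν + b) * (b + 2)) * r ^ (b + 2) := by
  have hinner : ∀ s, 0 ≤ s →
      ∫ t in (0:ℝ)..s, t ^ (ν - 1) * (K * t ^ b) = K / (ν + b) * s ^ (ν + b) := fun s hs => by
    have : EqOn (fun t => t ^ (ν - 1) * (K * t ^ b)) (fun t => K * t ^ (ν - 1 + b)) (uIcc 0 s) :=
      fun t ht => by
        rw [uIcc_of_le hs] at ht
        simp only [Real.rpow_add_of_nonneg ht.1 (by linarith : 0 ≤ ν - 1) hb]
        ring
    rw [integral_congr this, intervalIntegral.integral_const_mul,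
      integral_rpow (Or.inl (by linarith)), Real.zero_rpow (by linarith),
      show ν - 1 + b + 1 = ν + b by ring]
    ring
  have houter : EqOn (fun s => s ^ (1 - ν) * ∫ t in (0:ℝ)..s, t ^ (ν - 1) * (K * t ^ b))
      (fun s => K / (ν + b) * s ^ (b + 1)) (uIcc 0 r) := fun s hs => by
    rw [uIcc_of_le hr] at hs
    simp only [hinner s hs.1, show b + 1 = 1 - ν + (ν + b) by ring,
      Real.rpow_add' hs.1 (by linarith : 1 - ν + (ν + b) ≠ 0)]
    ring
  rw [radialPotential, integral_congr houter, intervalIntegral.integral_const_mul,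
    integral_rpow (Or.inl (by linarith)), Real.zero_rpow (by linarith),
    show b + 1 + 1 = b + 2 by ring]
  field_simp
  ring

end RadialPotential

structure RadialSupersolution (ν q : ℝ) (u w : ℝ → ℝ) : Prop where
  continuousOn_u : ContinuousOn u (Ici 0)
  continuousOn_w : ContinuousOn w (Ici 0)
  w_nonneg : ∀ r, 0 ≤ r → 0 ≤ w r
  u_le : ∀ r, 0 ≤ r → u r ≤ u 0 - radialPotential ν (fun t => w t ^ q) r
  le_w : ∀ r, 0 ≤ r → w 0 - radialPotential ν u r ≤ w r

-- The product of the two constants produced by `radialPotential_const_mul_rpow` when a lower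
-- bound `C r^b` for `w` is pushed through both integral inequalities.
noncomputable def radialDenom (ν q b : ℝ) : ℝ :=
  (ν + q * b) * (q * b + 2) * ((ν + (q * b + 2)) * (q * b + 4))

lemma radialDenom_pos {ν q b : ℝ} (hν : 0 < ν) (hqb : 0 ≤ q * b) : 0 < radialDenom ν q b := by
  unfold radialDenom
  positivity

lemma radialDenom_le {ν q b : ℝ} (hν : 0 ≤ ν) (hqb : 0 ≤ q * b) :
    radialDenom ν q b ≤ (ν + (q * b + 4)) ^ 4 := by
  have h₁ : (ν + q * b) * (q * b + 2) ≤ (ν + (q * b + 4)) ^ 2 := by nlinarith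
  have h₂ : (ν + (q * b + 2)) * (q * b + 4) ≤ (ν + (q * b + 4)) ^ 2 := by nlinarith
  calc radialDenom ν q b ≤ (ν + (q * b + 4)) ^ 2 * (ν + (q * b + 4)) ^ 2 :=
        mul_le_mul h₁ h₂ (by positivity) (by positivity)
    _ = (ν + (q * b + 4)) ^ 4 := by ring

namespace RadialSupersolution

variable {ν q : ℝ} {u w : ℝ → ℝ}

lemma quadratic_lower_bound (h : RadialSupersolution ν q u w) (hν : 1 ≤ ν) {r : ℝ} (hr : 0 ≤ r) :
    -u 0 / (2 * ν) * r ^ (2 : ℝ) ≤ w r := by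
  have hu : ∀ t, 0 ≤ t → u t ≤ u 0 * t ^ (0 : ℝ) := fun t ht => by
    rw [Real.rpow_zero, mul_one]
    linarith [h.u_le t ht, radialPotential_nonneg (ν := ν)
      (fun s hs => Real.rpow_nonneg (h.w_nonneg s hs) q) ht]
  have hJ := radialPotential_mono hν h.continuousOn_u
    (continuousOn_const_mul_rpow _ le_rfl) hu hr
  rw [radialPotential_const_mul_rpow hν _ le_rfl hr, add_zero, zero_add] at hJ
  rw [show -u 0 / (2 * ν) = -(u 0 / (ν * 2)) by ring]
  linarith [h.le_w r hr, h.w_nonneg 0 le_rfl]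

lemma lower_bound_step (h : RadialSupersolution ν q u w) (hν : 1 ≤ ν) (hq : 0 ≤ q)
    (hu0 : u 0 ≤ 0) {C b : ℝ} (hC : 0 ≤ C) (hb : 0 ≤ b) (hw : ∀ r, 0 ≤ r → C * r ^ b ≤ w r)
    {r : ℝ} (hr : 0 ≤ r) : C ^ q / radialDenom ν q b * r ^ (q * b + 4) ≤ w r := by
  have hqb : 0 ≤ q * b := mul_nonneg hq hb
  have hwq : ∀ t, 0 ≤ t → C ^ q * t ^ (q * b) ≤ w t ^ q := fun t ht => by
    rw [mul_comm q b, Real.rpow_mul ht, ← Real.mul_rpow hC (Real.rpow_nonneg ht _)]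
    exact Real.rpow_le_rpow (by positivity) (hw t ht) hq
  set C₁ := C ^ q / ((ν + q * b) * (q * b + 2))
  have hu : ∀ t, 0 ≤ t → u t ≤ -C₁ * t ^ (q * b + 2) := fun t ht => by
    have hJ := radialPotential_mono hν (continuousOn_const_mul_rpow _ hqb)
      (h.continuousOn_w.rpow_const fun _ _ => Or.inr hq) hwq ht
    rw [radialPotential_const_mul_rpow hν _ hqb ht] at hJ
    linarith [h.u_le t ht]
  have hJ := radialPotential_mono hν h.continuousOn_u
    (continuousOn_const_mul_rpow _ (by linarith)) hu hr
  rw [radialPotential_const_mul_rpow hν _ (by linarith) hr, show q * b + 2 + 2 = q * b + 4 by ring]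
    at hJ
  rw [show C ^ q / radialDenom ν q b = -(-C₁ / ((ν + (q * b + 2)) * (q * b + 4))) by
    rw [radialDenom, neg_div, neg_neg, div_div]]
  linarith [h.le_w r hr, h.w_nonneg 0 le_rfl]

end RadialSupersolution

noncomputable def exponentSeq (q : ℝ) : ℕ → ℝ
  | 0 => 2
  | k + 1 => q * exponentSeq q k + 4

noncomputable def coeffSeq (ν q c : ℝ) : ℕ → ℝ
  | 0 => c
  | k + 1 => coeffSeq ν q c k ^ q / radialDenom ν q (exponentSeq q k)

section Sequences

variable {ν q c : ℝ}

lemma exponentSeq_nonneg (hq : 0 ≤ q) : ∀ k, 0 ≤ exponentSeq q k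
  | 0 => zero_le_two
  | k + 1 => by have := exponentSeq_nonneg hq k; simp only [exponentSeq]; positivity

lemma exponentSeq_add_eq (hq : q ≠ 1) :
    ∀ k, exponentSeq q k + 4 / (q - 1) = (2 + 4 / (q - 1)) * q ^ k
  | 0 => by simp [exponentSeq]
  | k + 1 => by
    have hq' : q - 1 ≠ 0 := sub_ne_zero.2 hq
    have ih := exponentSeq_add_eq hq k
    rw [exponentSeq, pow_succ, ← mul_assoc, ← ih]
    field_simp
    ring

lemma radialDenom_exponentSeq_le (hν : 0 ≤ ν) (hq : 1 < q) (k : ℕ) :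
    radialDenom ν q (exponentSeq q k) ≤ ((ν + 2 + 4 / (q - 1)) * q) ^ 4 * (q ^ 4) ^ k := by
  have hβ : 0 ≤ 4 / (q - 1) := div_nonneg zero_le_four (by linarith)
  have hqk : 1 ≤ q ^ (k + 1) := one_le_pow₀ hq.le
  have hnext : ν + exponentSeq q (k + 1) ≤ (ν + 2 + 4 / (q - 1)) * q ^ (k + 1) := by
    nlinarith [exponentSeq_add_eq hq.ne' (k + 1)]
  calc radialDenom ν q (exponentSeq q k) ≤ (ν + exponentSeq q (k + 1)) ^ 4 :=
        radialDenom_le hν (mul_nonneg (by linarith) (exponentSeq_nonneg (by linarith) k))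
    _ ≤ ((ν + 2 + 4 / (q - 1)) * q ^ (k + 1)) ^ 4 :=
        pow_le_pow_left₀ (add_nonneg hν (exponentSeq_nonneg (by linarith) _)) hnext 4
    _ = ((ν + 2 + 4 / (q - 1)) * q) ^ 4 * (q ^ 4) ^ k := by ring

lemma coeffSeq_nonneg (hν : 0 < ν) (hq : 0 ≤ q) (hc : 0 ≤ c) : ∀ k, 0 ≤ coeffSeq ν q c k
  | 0 => hc
  | k + 1 => div_nonneg (Real.rpow_nonneg (coeffSeq_nonneg hν hq hc k) q)
      (radialDenom_pos hν (mul_nonneg hq (exponentSeq_nonneg hq k))).le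

lemma coeffSeq_mul_rpow_div_le (hν : 0 < ν) (hq : 1 < q) (hc : 0 ≤ c) {R : ℝ} (hR : 1 ≤ R)
    (k : ℕ) :
    (coeffSeq ν q c k * R ^ exponentSeq q k) ^ q / (((ν + 2 + 4 / (q - 1)) * q) ^ 4 * (q ^ 4) ^ k)
      ≤ coeffSeq ν q c (k + 1) * R ^ exponentSeq q (k + 1) := by
  have hck : 0 ≤ coeffSeq ν q c k := coeffSeq_nonneg hν (by linarith) hc k
  have hqa : 0 ≤ q * exponentSeq q k :=
    mul_nonneg (by linarith) (exponentSeq_nonneg (by linarith) k)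
  calc _ ≤ (coeffSeq ν q c k * R ^ exponentSeq q k) ^ q / radialDenom ν q (exponentSeq q k) :=
        div_le_div_of_nonneg_left (by positivity) (radialDenom_pos hν hqa)
          (radialDenom_exponentSeq_le hν.le hq k)
    _ = coeffSeq ν q c k ^ q / radialDenom ν q (exponentSeq q k) * R ^ (q * exponentSeq q k) :=
        by
        rw [Real.mul_rpow hck (by positivity), ← Real.rpow_mul (by positivity), mul_comm q]
        ring
    _ ≤ coeffSeq ν q c (k + 1) * R ^ exponentSeq q (k + 1) := by
        rw [coeffSeq, exponentSeq]
        gcongr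
        · exact div_nonneg (Real.rpow_nonneg hck q) (radialDenom_pos hν hqa).le
        · linarith

end Sequences

lemma exists_tendsto_atTop_of_rpow_div_le {q A K : ℝ} (hq : 1 < q) (hA : 0 < A) (hK : 1 < K) :
    ∃ L, ∀ x : ℕ → ℝ, L ≤ x 0 → (∀ k, x k ^ q / (A * K ^ k) ≤ x (k + 1)) →
      Tendsto x atTop atTop := by
  -- chosen so that `L * M ^ k` satisfies the recursion with equality
  set M := K ^ (q - 1)⁻¹
  set L := (A * M) ^ (q - 1)⁻¹
  have hM : 1 < M := Real.one_lt_rpow hK (inv_pos.2 (by linarith))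
  have hL : 0 < L := by positivity
  have hMq : M ^ q = M * K := by
    rw [← add_sub_cancel 1 q, Real.rpow_add (by linarith), Real.rpow_one,
      Real.rpow_inv_rpow (by linarith) (by linarith)]
  have hLq : L ^ q = L * (A * M) := by
    rw [← add_sub_cancel 1 q, Real.rpow_add hL, Real.rpow_one,
      Real.rpow_inv_rpow (by positivity) (by linarith)]
  refine ⟨L, fun x hx₀ hx => ?_⟩
  have hlow : ∀ k, L * M ^ k ≤ x k := by
    intro k
    induction k with
    | zero => simpa using hx₀
    | succ k ih =>
      calc L * M ^ (k + 1) = (L * M ^ k) ^ q / (A * K ^ k) := by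
            rw [Real.mul_rpow hL.le (by positivity), ← Real.rpow_pow_comm (by positivity), hMq,
              hLq]
            field_simp
            ring
        _ ≤ x k ^ q / (A * K ^ k) := by gcongr
        _ ≤ x (k + 1) := hx k
  exact tendsto_atTop_mono hlow ((tendsto_pow_atTop_atTop_of_one_lt hM).const_mul_atTop hL)

namespace RadialSupersolution

variable {ν q : ℝ} {u w : ℝ → ℝ}

lemma coeffSeq_mul_rpow_le (h : RadialSupersolution ν q u w) (hν : 1 ≤ ν) (hq : 0 ≤ q)
    (hu0 : u 0 ≤ 0) (k : ℕ) {r : ℝ} (hr : 0 ≤ r) :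
    coeffSeq ν q (-u 0 / (2 * ν)) k * r ^ exponentSeq q k ≤ w r := by
  induction k generalizing r with
  | zero => exact h.quadratic_lower_bound hν hr
  | succ k ih =>
    exact h.lower_bound_step hν hq hu0
      (coeffSeq_nonneg (by linarith) hq (div_nonneg (by linarith) (by linarith)) k)
      (exponentSeq_nonneg hq k) (fun t ht => ih ht) hr

theorem nonneg_apply_zero (h : RadialSupersolution ν q u w) (hν : 1 ≤ ν) (hq : 1 < q) :
    0 ≤ u 0 := by
  by_contra! hu0
  set c := -u 0 / (2 * ν)
  have hc : 0 < c := div_pos (by linarith) (by linarith)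
  obtain ⟨L, hL⟩ := exists_tendsto_atTop_of_rpow_div_le hq
    (by positivity : 0 < ((ν + 2 + 4 / (q - 1)) * q) ^ 4) (one_lt_pow₀ hq four_ne_zero)
  set R := max 1 (L / c)
  have hR : 1 ≤ R := le_max_left _ _
  have hx₀ : L ≤ coeffSeq ν q c 0 * R ^ exponentSeq q 0 := calc
    L ≤ c * R := by rw [← div_le_iff₀' hc]; exact le_max_right _ _
    _ ≤ c * R ^ (2 : ℝ) := by
        gcongr
        exact Real.self_le_rpow_of_one_le hR one_le_two
  have hx := hL _ hx₀ (coeffSeq_mul_rpow_div_le (by linarith) hq hc.le hR)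
  obtain ⟨k, hk⟩ := (hx.eventually_gt_atTop (w R)).exists
  exact hk.not_ge (h.coeffSeq_mul_rpow_le hν (by linarith) hu0.le k (by linarith))

end RadialSupersolution

/-- There is no pair of continuous functions `u, w : [0,∞) → ℝ` with `w ≥ 0`, `u(0) < 0`,
satisfying the iterated radial integral inequalities
`u(r) ≤ u(0) − ∫₀^r s^{1−n} ∫₀^s t^{n−1} w(t)^q dt ds` and
`w(r) ≥ w(0) − ∫₀^r s^{1−n} ∫₀^s t^{n−1} u(t) dt ds` for all `r ≥ 0`,
where `q = (n+4)/(n-4)` and `n ≥ 5`. -/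
theorem no_radial_supersolution_with_negative_initial_laplacian
    (n : ℕ) (hn : 5 ≤ n) (q : ℝ) (hq : q = ((n : ℝ) + 4) / ((n : ℝ) - 4)) :
    ¬ ∃ u w : ℝ → ℝ,
      ContinuousOn u (Set.Ici 0) ∧ ContinuousOn w (Set.Ici 0) ∧
      (∀ r : ℝ, 0 ≤ r → 0 ≤ w r) ∧ u 0 < 0 ∧
      (∀ r : ℝ, 0 ≤ r →
        u r ≤ u 0 - ∫ s in (0:ℝ)..r, s ^ (1 - (n : ℝ)) *
          ∫ t in (0:ℝ)..s, t ^ ((n : ℝ) - 1) * w t ^ q) ∧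
      (∀ r : ℝ, 0 ≤ r →
        w r ≥ w 0 - ∫ s in (0:ℝ)..r, s ^ (1 - (n : ℝ)) *
          ∫ t in (0:ℝ)..s, t ^ ((n : ℝ) - 1) * u t) := by
  rintro ⟨u, w, hu, hw, hw_nonneg, hu0, hu_le, hw_ge⟩
  have hn' : (5 : ℝ) ≤ n := by exact_mod_cast hn
  have hq₁ : 1 < q := by rw [hq, one_lt_div (by linarith)]; linarith
  have h : RadialSupersolution n q u w := ⟨hu, hw, hw_nonneg, hu_le, hw_ge⟩
  exact hu0.not_ge (h.nonneg_apply_zero (by linarith) hq₁)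
end

section
/- Let n ≥ 5 be an integer, Ω ⊆ ℝⁿ an open set, v : Ω → ℝ a smooth, strictly positive function, and c > 0 a constant such that −Δ(v^{(n−2)/(n−4)}) ≥ c · v^{(n+2)/(n−4)} on Ω. Then −Δv ≥ ((n−4)/(n−2)) c · v^{n/(n−4)} on Ω. In particular, for any sequence of points x_k ∈ Ω with v(x_k) → +∞ one has −Δv(x_k) → +∞. -/
open MeasureTheory Metric Filter Set
open scoped ENNReal NNReal

/-- The Euclidean Laplacian `Δf(x) = ∑ i, ∂²f/∂xᵢ²(x)`. -/
noncomputable def laplacian {n : ℕ} (f : EuclideanSpace ℝ (Fin n) → ℝ)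
    (x : EuclideanSpace ℝ (Fin n)) : ℝ :=
  ∑ i : Fin n, iteratedDeriv 2 (fun t : ℝ => f (x + t • EuclideanSpace.single i (1 : ℝ))) 0

lemma deriv2_rpow (g : ℝ → ℝ) (U : Set ℝ) (hU : IsOpen U) (h0 : (0:ℝ) ∈ U)
    (hg : ContDiffOn ℝ (⊤ : ℕ∞) g U) (hpos : ∀ t ∈ U, 0 < g t) (p : ℝ) :
    iteratedDeriv 2 (fun t => g t ^ p) 0 =
      p * g 0 ^ (p-1) * iteratedDeriv 2 g 0 + p*(p-1) * g 0 ^ (p-2) * (deriv g 0)^2 := by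
  have hdg : ∀ t ∈ U, HasDerivAt g (deriv g t) t := fun t ht =>
    ((hg.contDiffAt (hU.mem_nhds ht)).differentiableAt (by simp)).hasDerivAt
  have hdg1 : ContDiffOn ℝ 1 (deriv g) U := hg.deriv_of_isOpen hU (WithTop.coe_le_coe.mpr le_top)
  have hEq : deriv (fun t => g t ^ p) =ᶠ[nhds 0] fun t => deriv g t * p * g t ^ (p-1) := by
    filter_upwards [hU.mem_nhds h0] with t ht
    exact ((hdg t ht).rpow_const (Or.inl (hpos t ht).ne')).deriv
  have h2 : ∀ f : ℝ → ℝ, iteratedDeriv 2 f 0 = deriv (deriv f) 0 := by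
    intro f
    rw [show (2:ℕ) = 0+1+1 from rfl, iteratedDeriv_succ, iteratedDeriv_succ, iteratedDeriv_zero]
  rw [h2, h2, hEq.deriv_eq]
  have hg' : HasDerivAt (deriv g) (deriv (deriv g) 0) 0 :=
    ((hdg1.contDiffAt (hU.mem_nhds h0)).differentiableAt (by simp)).hasDerivAt
  have hgp : HasDerivAt (fun t => g t ^ (p-1)) (deriv g 0 * (p-1) * g 0 ^ (p-1-1)) 0 :=
    (hdg 0 h0).rpow_const (Or.inl (hpos 0 h0).ne')
  have := (show HasDerivAt (fun t => deriv g t * p * g t ^ (p-1)) _ 0 from (hg'.mul_const p).mul hgp).deriv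
  rw [this]
  have : p - 1 - 1 = p - 2 := by ring
  rw [this]
  ring

/-- If `v > 0` is smooth on an open `Ω ⊆ ℝⁿ`, `n ≥ 5`, and
`−Δ(v^{(n−2)/(n−4)}) ≥ c v^{(n+2)/(n−4)}` on `Ω` for some `c > 0`, then
`−Δv ≥ ((n−4)/(n−2)) c v^{n/(n−4)}` on `Ω`; in particular `−Δv(x_k) → +∞` along any
sequence `x_k ∈ Ω` with `v(x_k) → +∞`. -/
theorem neg_laplacian_lower_bound_of_scalar_curvature_positive
    (n : ℕ) (hn : 5 ≤ n)
    (Ω : Set (EuclideanSpace ℝ (Fin n))) (hΩ : IsOpen Ω)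
    (v : EuclideanSpace ℝ (Fin n) → ℝ)
    (hv_smooth : ContDiffOn ℝ (⊤ : ℕ∞) v Ω)
    (hv_pos : ∀ x ∈ Ω, 0 < v x)
    (c : ℝ) (hc : 0 < c)
    (hscal : ∀ x ∈ Ω,
      c * v x ^ (((n : ℝ) + 2) / ((n : ℝ) - 4)) ≤
        -laplacian (fun y => v y ^ (((n : ℝ) - 2) / ((n : ℝ) - 4))) x) :
    (∀ x ∈ Ω,
      (((n : ℝ) - 4) / ((n : ℝ) - 2)) * c * v x ^ ((n : ℝ) / ((n : ℝ) - 4)) ≤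
        -laplacian v x) ∧
    (∀ x : ℕ → EuclideanSpace ℝ (Fin n), (∀ k, x k ∈ Ω) →
      Filter.Tendsto (fun k => v (x k)) Filter.atTop Filter.atTop →
      Filter.Tendsto (fun k => -laplacian v (x k)) Filter.atTop Filter.atTop) := by
  have hN : (5:ℝ) ≤ (n:ℝ) := by exact_mod_cast hn
  set N : ℝ := (n:ℝ) with hNdef
  have h4 : 0 < N - 4 := by linarith
  have h2 : 0 < N - 2 := by linarith
  set p : ℝ := (N - 2) / (N - 4) with hp
  have hp1 : 1 ≤ p := by rw [hp, le_div_iff₀ h4]; linarith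
  have hp0 : 0 < p := lt_of_lt_of_le one_pos hp1
  have main : ∀ x ∈ Ω,
      (((N) - 4) / ((N) - 2)) * c * v x ^ ((N) / ((N) - 4)) ≤ -laplacian v x := by
    intro x hx
    -- for each direction, compute the second derivative of v^p along the line
    have key : ∀ i : Fin n,
        iteratedDeriv 2 (fun t : ℝ => v (x + t • EuclideanSpace.single i (1:ℝ)) ^ p) 0 ≥
          p * v x ^ (p-1) *
            iteratedDeriv 2 (fun t : ℝ => v (x + t • EuclideanSpace.single i (1:ℝ))) 0 := by
      intro i
      set L : ℝ → EuclideanSpace ℝ (Fin n) :=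
        fun t => x + t • EuclideanSpace.single i (1:ℝ) with hL
      have hLc : ContDiff ℝ (⊤ : ℕ∞) L := by
        apply contDiff_const.add
        exact contDiff_id.smul contDiff_const
      set U : Set ℝ := L ⁻¹' Ω with hUdef
      have hU : IsOpen U := hΩ.preimage hLc.continuous
      have hL0 : L 0 = x := by simp [hL]
      have h0 : (0:ℝ) ∈ U := by simp [hUdef, hL0, hx]
      have hg : ContDiffOn ℝ (⊤ : ℕ∞) (fun t => v (L t)) U :=
        hv_smooth.comp hLc.contDiffOn (fun t ht => ht)
      have hpos : ∀ t ∈ U, 0 < v (L t) := fun t ht => hv_pos _ ht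
      have := deriv2_rpow (fun t => v (L t)) U hU h0 hg hpos p
      rw [this, hL0]
      have : 0 ≤ p*(p-1) * v x ^ (p-2) * (deriv (fun t => v (L t)) 0)^2 := by
        have h1 : (0:ℝ) ≤ p - 1 := by linarith
        have h2' : (0:ℝ) < v x ^ (p-2) := Real.rpow_pos_of_pos (hv_pos x hx) _
        positivity
      linarith
    have hlap : p * v x ^ (p-1) * laplacian v x ≤ laplacian (fun y => v y ^ p) x := by
      unfold laplacian
      rw [Finset.mul_sum]
      exact Finset.sum_le_sum fun i _ => key i
    have hs := hscal x hx
    have hAeq : ((N:ℝ) + 2) / (N - 4) = (N + 2) / (N - 4) := rfl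
    have hsc : c * v x ^ ((N + 2) / (N - 4)) ≤ p * v x ^ (p-1) * (-laplacian v x) := by
      have : -laplacian (fun y => v y ^ p) x ≤ p * v x ^ (p-1) * (-laplacian v x) := by
        nlinarith [hlap]
      calc c * v x ^ ((N + 2) / (N - 4)) ≤ -laplacian (fun y => v y ^ p) x := hs
        _ ≤ _ := this
    have hvx : 0 < v x := hv_pos x hx
    have hrw : v x ^ ((N + 2) / (N - 4)) = v x ^ (N / (N - 4)) * v x ^ (p - 1) := by
      rw [← Real.rpow_add hvx]
      congr 1
      rw [hp]
      field_simp
      ring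
    rw [hrw] at hsc
    have hq : 0 < v x ^ (p - 1) := Real.rpow_pos_of_pos hvx _
    have hfin : ((N - 4) / (N - 2)) * c = c / p := by
      rw [hp]; field_simp
    rw [hfin]
    rw [div_mul_eq_mul_div, div_le_iff₀ hp0]
    nlinarith [hsc, Real.rpow_pos_of_pos hvx (N / (N-4))]
  constructor
  · exact main
  · intro x hxΩ hxT
    have hK : 0 < ((N - 4) / (N - 2)) * c := by positivity
    have hq : 0 < N / (N - 4) := by positivity
    have h1 : Tendsto (fun k => ((N - 4) / (N - 2)) * c * v (x k) ^ (N / (N - 4)))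
        atTop atTop := by
      apply Tendsto.const_mul_atTop hK
      exact (tendsto_rpow_atTop hq).comp hxT
    exact tendsto_atTop_mono (fun k => main (x k) (hxΩ k)) h1
end

section
/- Let n ≥ 5 be an integer, let g be a smooth real-valued function on an open neighborhood of the origin in ℝⁿ, and let R > 0 be such that v(x) := |x|^{4−n} g(x/|x|²) is defined for all |x| ≥ R. Then |x|^{n−2} · (−Δv)(x) → 2(n−4) g(0) as |x| → ∞. In particular, if g(0) > 0, then −Δv(x) > 0 for all sufficiently large |x|. -/
open MeasureTheory Metric Filter Set
open scoped ENNReal NNReal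

lemma line_second_deriv {n : ℕ} {g : EuclideanSpace ℝ (Fin n) → ℝ}
    {V : Set (EuclideanSpace ℝ (Fin n))} (hV : IsOpen V) (hg : ContDiffOn ℝ (⊤ : ℕ∞) g V)
    (p : ℝ) {v : EuclideanSpace ℝ (Fin n) → ℝ}
    (hv : ∀ z : EuclideanSpace ℝ (Fin n), v z = (‖z‖ ^ 2) ^ p * g ((‖z‖ ^ 2)⁻¹ • z))
    {x : EuclideanSpace ℝ (Fin n)} (hx : x ≠ 0) (i : Fin n)
    {y c1 : EuclideanSpace ℝ (Fin n)}
    (hy : y = (‖x‖ ^ 2)⁻¹ • x) (hyV : y ∈ V)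
    (hc1 : c1 = (‖x‖ ^ 2)⁻¹ • EuclideanSpace.single i (1 : ℝ)
      + (-(2 * x i) / (‖x‖ ^ 2) ^ 2) • x) :
    iteratedDeriv 2 (fun t : ℝ => v (x + t • EuclideanSpace.single i (1 : ℝ))) 0 =
      (2 * p * (‖x‖ ^ 2) ^ (p - 1)
          + 2 * x i * p * (2 * x i * (p - 1) * (‖x‖ ^ 2) ^ (p - 1 - 1))) * g y
        + 2 * x i * p * (‖x‖ ^ 2) ^ (p - 1) * fderiv ℝ g y c1 * 2
        + (‖x‖ ^ 2) ^ p * (fderiv ℝ (fderiv ℝ g) y c1 c1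
            + (-(4 * x i) / (‖x‖ ^ 2) ^ 2 * fderiv ℝ g y (EuclideanSpace.single i (1 : ℝ))
              + ((-2) * (‖x‖ ^ 2) ^ 2 + 2 * x i * (2 * ‖x‖ ^ 2 * (2 * x i))) / ((‖x‖ ^ 2) ^ 2) ^ 2
                * fderiv ℝ g y x)) := by
  classical
  set e : EuclideanSpace ℝ (Fin n) := EuclideanSpace.single i (1 : ℝ) with he
  set d : ℝ := x i with hd
  set r2 : ℝ := ‖x‖ ^ 2 with hr2
  have hr2pos : 0 < r2 := by
    have : 0 < ‖x‖ := norm_pos_iff.mpr hx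
    rw [hr2]; positivity
  have hr2ne : r2 ≠ 0 := hr2pos.ne'
  set Q : ℝ → ℝ := fun t => r2 + 2 * d * t + t ^ 2 with hQdef
  set m : ℝ → EuclideanSpace ℝ (Fin n) := fun t => x + t • e with hmdef
  have hQ : ∀ t, Q t = ‖m t‖ ^ 2 := by
    intro t
    rw [hmdef, hQdef]
    simp only
    rw [norm_add_sq_real, real_inner_smul_right, EuclideanSpace.inner_single_right]
    simp [norm_smul, he]
    ring
  set c : ℝ → EuclideanSpace ℝ (Fin n) := fun t => (Q t)⁻¹ • m t with hcdef
  set c' : ℝ → EuclideanSpace ℝ (Fin n) :=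
    fun t => (Q t)⁻¹ • e + (-(2 * d + 2 * t) / (Q t) ^ 2) • m t with hc'def
  -- the open set of good parameters
  set W : Set (EuclideanSpace ℝ (Fin n)) := {z | z ≠ 0 ∧ (‖z‖ ^ 2)⁻¹ • z ∈ V} with hWdef
  have hWopen : IsOpen W := by
    have h1 : IsOpen {z : EuclideanSpace ℝ (Fin n) | z ≠ 0} := isOpen_ne
    have h2 : ContinuousOn (fun z : EuclideanSpace ℝ (Fin n) => (‖z‖ ^ 2)⁻¹ • z)
        {z : EuclideanSpace ℝ (Fin n) | z ≠ 0} := by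
      refine ContinuousOn.smul (f := fun z : EuclideanSpace ℝ (Fin n) => (‖z‖ ^ 2)⁻¹) (g := id) ?_ continuousOn_id
      exact ((continuous_norm.pow 2).continuousOn).inv₀ (fun z hz => by
        simpa [sq_eq_zero_iff] using hz)
    have := h2.isOpen_inter_preimage h1 hV
    convert this using 1
    exact Set.ext fun z => Iff.rfl
  set S : Set ℝ := m ⁻¹' W with hSdef
  have hmcont : Continuous m := by
    apply continuous_const.add
    exact continuous_id.smul continuous_const
  have hSopen : IsOpen S := hWopen.preimage hmcont
  have hm0 : m 0 = x := by simp [hmdef]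
  have hS0 : (0 : ℝ) ∈ S := by
    have : m 0 ∈ W := by
      rw [hm0]
      exact ⟨hx, by rw [← hr2, ← hy]; exact hyV⟩
    exact this
  have hQpos : ∀ t ∈ S, 0 < Q t := by
    intro t ht
    rw [hQ t]
    have h1 : m t ≠ 0 := ht.1
    have h2 : 0 < ‖m t‖ := norm_pos_iff.mpr h1
    positivity
  have hcV : ∀ t ∈ S, c t ∈ V := by
    intro t ht
    have := ht.2
    show (Q t)⁻¹ • m t ∈ V
    rwa [hQ t]
  have hQd : ∀ t : ℝ, HasDerivAt Q (2 * d + 2 * t) t := by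
    intro t
    have h1 : HasDerivAt (fun s : ℝ => r2 + 2 * d * s + s ^ 2) (0 + 2 * d * 1 + 2 * t ^ 1) t := by
      exact ((hasDerivAt_const t r2).add ((hasDerivAt_id t).const_mul (2 * d))).add
        (by simpa using hasDerivAt_pow 2 t)
    convert h1 using 1
    ring
  have hmd : ∀ t : ℝ, HasDerivAt m e t := by
    intro t
    simpa [hmdef] using ((hasDerivAt_id t).smul_const e).const_add x
  have hcd : ∀ t ∈ S, HasDerivAt c (c' t) t := by
    intro t ht
    exact ((hQd t).inv (hQpos t ht).ne').smul (hmd t)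
  set D : EuclideanSpace ℝ (Fin n) → (EuclideanSpace ℝ (Fin n) →L[ℝ] ℝ) := fderiv ℝ g with hD
  set ψ : ℝ → ℝ := fun t =>
    (2 * d + 2 * t) * p * (Q t) ^ (p - 1) * g (c t) + (Q t) ^ p * (D (c t)) (c' t) with hψdef
  have hφd : ∀ t ∈ S, HasDerivAt (fun s => v (m s)) (ψ t) t := by
    intro t ht
    have heq : (fun s => v (m s)) = fun s => (Q s) ^ p * g (c s) := by
      funext s
      rw [hv (m s), ← hQ s]
    rw [heq]
    have hgF : HasFDerivAt g (D (c t)) (c t) := by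
      have h1 : ContDiffAt ℝ (⊤ : ℕ∞) g (c t) := hg.contDiffAt (hV.mem_nhds (hcV t ht))
      exact (h1.differentiableAt (by simp)).hasFDerivAt
    have hgc : HasDerivAt (fun s => g (c s)) ((D (c t)) (c' t)) t :=
      hgF.comp_hasDerivAt t (hcd t ht)
    have hQp : HasDerivAt (fun s => (Q s) ^ p) ((2 * d + 2 * t) * p * (Q t) ^ (p - 1)) t :=
      (hQd t).rpow_const (Or.inl (hQpos t ht).ne')
    exact hQp.mul hgc
  -- facts at 0
  have hQ0 : Q 0 = r2 := by simp [hQdef]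
  have hQ0ne : Q 0 ≠ 0 := by rw [hQ0]; exact hr2ne
  have hc0 : c 0 = y := by
    show (Q 0)⁻¹ • m 0 = y
    rw [hQ0, hm0, hy]
  have hc'0 : c' 0 = c1 := by
    show (Q 0)⁻¹ • e + (-(2 * d + 2 * 0) / (Q 0) ^ 2) • m 0 = c1
    rw [hQ0, hm0, hc1]
    norm_num
  set B : EuclideanSpace ℝ (Fin n) →
      (EuclideanSpace ℝ (Fin n) →L[ℝ] (EuclideanSpace ℝ (Fin n) →L[ℝ] ℝ)) :=
    fderiv ℝ D with hB
  have hgy : ContDiffAt ℝ (⊤ : ℕ∞) g y := hg.contDiffAt (hV.mem_nhds hyV)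
  have hBF : HasFDerivAt D (B y) y := by
    have h1 : ContDiffAt ℝ 1 (fderiv ℝ g) y := hgy.fderiv_right (WithTop.coe_le_coe.mpr le_top)
    exact (h1.differentiableAt one_ne_zero).hasFDerivAt
  have hDc : HasDerivAt (fun t => D (c t)) ((B (c 0)) (c' 0)) 0 := by
    rw [← hc0] at hBF
    exact hBF.comp_hasDerivAt 0 (hcd 0 hS0)
  have hgF0 : HasFDerivAt g (D y) y := (hgy.differentiableAt (by simp)).hasFDerivAt
  have hgc0 : HasDerivAt (fun t => g (c t)) ((D (c 0)) (c' 0)) 0 := by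
    rw [← hc0] at hgF0
    exact hgF0.comp_hasDerivAt 0 (hcd 0 hS0)
  have h2d : HasDerivAt (fun t : ℝ => 2 * d + 2 * t) 2 0 := by
    simpa using ((hasDerivAt_id (0 : ℝ)).const_mul 2).const_add (2 * d)
  have hu1 : HasDerivAt (fun t => (Q t)⁻¹ • e) ((-(2 * d + 2 * 0) / (Q 0) ^ 2) • e) 0 :=
    ((hQd 0).inv hQ0ne).smul_const e
  have hb : HasDerivAt (fun t => -(2 * d + 2 * t) / (Q t) ^ 2)
      (((-2) * (Q 0) ^ 2 - (-(2 * d + 2 * 0)) * ((2 : ℕ) * (Q 0) ^ (2 - 1) * (2 * d + 2 * 0)))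
        / ((Q 0) ^ 2) ^ 2) 0 :=
    (h2d.neg).div ((hQd 0).pow 2) (pow_ne_zero 2 hQ0ne)
  have hu2 : HasDerivAt (fun t => (-(2 * d + 2 * t) / (Q t) ^ 2) • m t)
      ((-(2 * d + 2 * 0) / (Q 0) ^ 2) • e
        + (((-2) * (Q 0) ^ 2 - (-(2 * d + 2 * 0)) * ((2 : ℕ) * (Q 0) ^ (2 - 1) * (2 * d + 2 * 0)))
            / ((Q 0) ^ 2) ^ 2) • m 0) 0 :=
    hb.smul (hmd 0)
  have hc'd : HasDerivAt c'
      ((-(2 * d + 2 * 0) / (Q 0) ^ 2) • e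
        + ((-(2 * d + 2 * 0) / (Q 0) ^ 2) • e
          + (((-2) * (Q 0) ^ 2 - (-(2 * d + 2 * 0)) * ((2 : ℕ) * (Q 0) ^ (2 - 1) * (2 * d + 2 * 0)))
              / ((Q 0) ^ 2) ^ 2) • m 0)) 0 :=
    hu1.add hu2
  have hΦ : HasDerivAt (fun t => (D (c t)) (c' t))
      ((B (c 0) (c' 0)) (c' 0) + (D (c 0))
        ((-(2 * d + 2 * 0) / (Q 0) ^ 2) • e
          + ((-(2 * d + 2 * 0) / (Q 0) ^ 2) • e
            + (((-2) * (Q 0) ^ 2 - (-(2 * d + 2 * 0)) * ((2 : ℕ) * (Q 0) ^ (2 - 1) * (2 * d + 2 * 0)))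
                / ((Q 0) ^ 2) ^ 2) • m 0))) 0 :=
    hDc.clm_apply hc'd
  have hQp1 : HasDerivAt (fun t => (Q t) ^ (p - 1))
      ((2 * d + 2 * 0) * (p - 1) * (Q 0) ^ (p - 1 - 1)) 0 :=
    (hQd 0).rpow_const (Or.inl hQ0ne)
  have hA : HasDerivAt (fun t => (2 * d + 2 * t) * p * (Q t) ^ (p - 1))
      (2 * p * (Q 0) ^ (p - 1)
        + (2 * d + 2 * 0) * p * ((2 * d + 2 * 0) * (p - 1) * (Q 0) ^ (p - 1 - 1))) 0 :=
    (h2d.mul_const p).mul hQp1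
  have hQpd : HasDerivAt (fun t => (Q t) ^ p) ((2 * d + 2 * 0) * p * (Q 0) ^ (p - 1)) 0 :=
    (hQd 0).rpow_const (Or.inl hQ0ne)
  have hψd : HasDerivAt ψ
      ((2 * p * (Q 0) ^ (p - 1)
          + (2 * d + 2 * 0) * p * ((2 * d + 2 * 0) * (p - 1) * (Q 0) ^ (p - 1 - 1))) * g (c 0)
        + (2 * d + 2 * 0) * p * (Q 0) ^ (p - 1) * ((D (c 0)) (c' 0))
        + ((2 * d + 2 * 0) * p * (Q 0) ^ (p - 1) * ((D (c 0)) (c' 0))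
          + (Q 0) ^ p * ((B (c 0) (c' 0)) (c' 0) + (D (c 0))
            ((-(2 * d + 2 * 0) / (Q 0) ^ 2) • e
              + ((-(2 * d + 2 * 0) / (Q 0) ^ 2) • e
                + (((-2) * (Q 0) ^ 2 - (-(2 * d + 2 * 0)) * ((2 : ℕ) * (Q 0) ^ (2 - 1) * (2 * d + 2 * 0)))
                    / ((Q 0) ^ 2) ^ 2) • m 0))))) 0 := by
    exact (hA.mul hgc0).add (hQpd.mul hΦ)
  rw [iteratedDeriv_succ, iteratedDeriv_one]
  have hSmem : S ∈ nhds (0 : ℝ) := hSopen.mem_nhds hS0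
  have hev : deriv (fun t : ℝ => v (x + t • e)) =ᶠ[nhds (0 : ℝ)] ψ := by
    filter_upwards [hSmem] with t ht
    have := (hφd t ht).deriv
    simpa only [hmdef] using this
  rw [Filter.EventuallyEq.deriv_eq hev, hψd.deriv, hQ0, hc0, hc'0, hm0]
  simp only [map_add, _root_.map_smul, smul_eq_mul]
  push_cast
  ring


lemma laplacian_formula {n : ℕ} {g : EuclideanSpace ℝ (Fin n) → ℝ}
    {V : Set (EuclideanSpace ℝ (Fin n))} (hV : IsOpen V) (hg : ContDiffOn ℝ (⊤ : ℕ∞) g V)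
    (p : ℝ) {v : EuclideanSpace ℝ (Fin n) → ℝ}
    (hv : ∀ z : EuclideanSpace ℝ (Fin n), v z = (‖z‖ ^ 2) ^ p * g ((‖z‖ ^ 2)⁻¹ • z))
    {x : EuclideanSpace ℝ (Fin n)} (hx : x ≠ 0) (hyV : (‖x‖ ^ 2)⁻¹ • x ∈ V)
    (hp : 2 * p = 4 - (n : ℝ)) :
    laplacian v x = (‖x‖ ^ 2) ^ (p - 2) *
      ((‖x‖ ^ 2) * ((8 - 2 * (n : ℝ)) * g ((‖x‖ ^ 2)⁻¹ • x)
          - 4 * fderiv ℝ g ((‖x‖ ^ 2)⁻¹ • x) ((‖x‖ ^ 2)⁻¹ • x))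
        + ∑ i : Fin n, fderiv ℝ (fderiv ℝ g) ((‖x‖ ^ 2)⁻¹ • x)
            (EuclideanSpace.single i 1 - (2 * x i) • ((‖x‖ ^ 2)⁻¹ • x))
            (EuclideanSpace.single i 1 - (2 * x i) • ((‖x‖ ^ 2)⁻¹ • x))) := by
  classical
  set r2 : ℝ := ‖x‖ ^ 2 with hr2
  have hxn : 0 < ‖x‖ := norm_pos_iff.mpr hx
  have hr2pos : 0 < r2 := by rw [hr2]; positivity
  have hr2ne : r2 ≠ 0 := hr2pos.ne'
  set y : EuclideanSpace ℝ (Fin n) := r2⁻¹ • x with hyd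
  set D := fderiv ℝ g with hD
  set B := fderiv ℝ (fderiv ℝ g) with hB
  set w : ℝ := r2 ^ (p - 2) with hw
  have ep1 : r2 ^ (p - 1) = w * r2 := by
    rw [hw, show p - 1 = (p - 2) + 1 by ring, Real.rpow_add hr2pos, Real.rpow_one]
  have ep0 : r2 ^ p = w * (r2 * r2) := by
    rw [hw, show p = (p - 2) + 2 by ring, Real.rpow_add hr2pos,
      show (2 : ℝ) = ((2 : ℕ) : ℝ) by norm_num, Real.rpow_natCast]
    ring
  have ep2 : r2 ^ (p - 1 - 1) = w := by rw [hw, show p - 1 - 1 = p - 2 by ring]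
  have hbasis : ∑ i : Fin n, x i • EuclideanSpace.single i (1 : ℝ) = x := by
    have h := (EuclideanSpace.basisFun (Fin n) ℝ).sum_repr x
    simpa only [EuclideanSpace.basisFun_apply, EuclideanSpace.basisFun_repr] using h
  have hsum1 : ∑ i : Fin n, x i * x i = r2 := by
    have h := real_inner_self_eq_norm_sq x
    rw [PiLp.inner_apply] at h
    simpa [RCLike.inner_apply, sq, hr2] using h
  have hsum2 : ∑ i : Fin n, x i * D y (EuclideanSpace.single i (1 : ℝ)) = D y x := by
    conv_rhs => rw [← hbasis]
    rw [map_sum]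
    simp [smul_eq_mul]
  have hxy : x = r2 • y := by
    rw [hyd, smul_smul, mul_inv_cancel₀ hr2ne, one_smul]
  have hDyx : D y x = r2 * D y y := by
    conv_lhs => rw [hxy]
    rw [_root_.map_smul, smul_eq_mul]
  set A : Fin n → EuclideanSpace ℝ (Fin n) :=
    fun i => EuclideanSpace.single i 1 - (2 * x i) • y with hA2
  set c1 : Fin n → EuclideanSpace ℝ (Fin n) :=
    fun i => r2⁻¹ • EuclideanSpace.single i (1 : ℝ) + (-(2 * x i) / r2 ^ 2) • x with hc1d
  show laplacian v x = w * (r2 * ((8 - 2 * (n : ℝ)) * g y - 4 * D y y)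
    + ∑ i : Fin n, B y (A i) (A i))
  have hc1A : ∀ i, c1 i = r2⁻¹ • A i := by
    intro i
    rw [hc1d, hA2, hyd]
    simp only
    match_scalars <;> ring
  have hBc1 : ∀ i, B y (c1 i) (c1 i) = r2⁻¹ * (r2⁻¹ * B y (A i) (A i)) := by
    intro i
    rw [hc1A i]
    simp [smul_eq_mul]
  have hDc1 : ∀ i, D y (c1 i)
      = r2⁻¹ * D y (EuclideanSpace.single i (1 : ℝ)) + (-(2 * x i) / r2 ^ 2) * D y x := by
    intro i
    rw [hc1d]
    simp [smul_eq_mul]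
  have hyV' : y ∈ V := hyV
  have hline : ∀ i : Fin n,
      iteratedDeriv 2 (fun t : ℝ => v (x + t • EuclideanSpace.single i (1 : ℝ))) 0 =
      (2 * p * r2 ^ (p - 1) + 2 * x i * p * (2 * x i * (p - 1) * r2 ^ (p - 1 - 1))) * g y
        + 2 * x i * p * r2 ^ (p - 1) * D y (c1 i) * 2
        + r2 ^ p * (B y (c1 i) (c1 i)
            + (-(4 * x i) / r2 ^ 2 * D y (EuclideanSpace.single i (1 : ℝ))
              + ((-2) * r2 ^ 2 + 2 * x i * (2 * r2 * (2 * x i))) / (r2 ^ 2) ^ 2 * D y x)) := by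
    intro i
    exact line_second_deriv hV hg p hv hx i rfl hyV' rfl
  have hstep : laplacian v x = ∑ i : Fin n,
      ((2 * p * w * r2 * g y - 2 * w * D y x)
        + (4 * p * (p - 1) * w * g y + (8 - 8 * p) * w * r2⁻¹ * D y x) * (x i * x i)
        + ((4 * p - 4) * w) * (x i * D y (EuclideanSpace.single i (1 : ℝ)))
        + w * B y (A i) (A i)) := by
    rw [laplacian]
    refine Finset.sum_congr rfl fun i _ => ?_
    rw [hline i, hDc1 i, hBc1 i, ep1, ep0, ep2]
    field_simp
    ring
  rw [hstep]
  simp only [Finset.sum_add_distrib, Finset.sum_const, Finset.card_univ, Fintype.card_fin,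
    ← Finset.mul_sum, hsum1, hsum2, nsmul_eq_mul]
  rw [hDyx]
  have hp' : p = (4 - (n : ℝ)) / 2 := by linarith
  rw [hp']
  field_simp
  ring


set_option maxHeartbeats 2000000 in
/-- If `v(x) = |x|^{4−n} g(x/|x|²)` with `g` smooth near the origin of `ℝⁿ`, `n ≥ 5`, then
`|x|^{n−2} (−Δv)(x) → 2(n−4) g(0)` as `|x| → ∞`; in particular, if `g(0) > 0` then
`−Δv(x) > 0` for all sufficiently large `|x|`. -/
theorem kelvin_expansion_neg_laplacian_asymptotics
    (n : ℕ) (hn : 5 ≤ n)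
    (g : EuclideanSpace ℝ (Fin n) → ℝ)
    (V : Set (EuclideanSpace ℝ (Fin n))) (hV : IsOpen V) (h0V : (0 : EuclideanSpace ℝ (Fin n)) ∈ V)
    (hg : ContDiffOn ℝ (⊤ : ℕ∞) g V)
    (R : ℝ) (hR : 0 < R)
    (hdef : ∀ x : EuclideanSpace ℝ (Fin n), R ≤ ‖x‖ → (‖x‖ ^ 2)⁻¹ • x ∈ V)
    (v : EuclideanSpace ℝ (Fin n) → ℝ)
    (hv : ∀ x : EuclideanSpace ℝ (Fin n),
      v x = ‖x‖ ^ (4 - (n : ℝ)) * g ((‖x‖ ^ 2)⁻¹ • x)) :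
    Filter.Tendsto (fun x : EuclideanSpace ℝ (Fin n) => ‖x‖ ^ ((n : ℝ) - 2) * (-laplacian v x))
      (Filter.comap (fun x : EuclideanSpace ℝ (Fin n) => ‖x‖) Filter.atTop)
      (nhds (2 * ((n : ℝ) - 4) * g 0)) ∧
    (0 < g 0 → ∃ R₁ : ℝ, ∀ x : EuclideanSpace ℝ (Fin n), R₁ ≤ ‖x‖ → 0 < -laplacian v x) := by
  classical
  have hn5 : (5 : ℝ) ≤ (n : ℝ) := by exact_mod_cast hn
  set p : ℝ := (4 - (n : ℝ)) / 2 with hp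
  have hp2 : 2 * p = 4 - (n : ℝ) := by rw [hp]; ring
  have hpne : p ≠ 0 := by rw [hp]; intro hcon; nlinarith [hcon]
  have hv' : ∀ z : EuclideanSpace ℝ (Fin n),
      v z = (‖z‖ ^ 2) ^ p * g ((‖z‖ ^ 2)⁻¹ • z) := by
    intro z
    by_cases hz : z = 0
    · subst hz
      rw [hv 0]
      simp only [norm_zero]
      rw [Real.zero_rpow (by linarith : (4 : ℝ) - (n : ℝ) ≠ 0),
        show ((0 : ℝ) ^ 2) = (0 : ℝ) by norm_num, Real.zero_rpow hpne]
    · rw [hv z]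
      congr 1
      have hzn : 0 < ‖z‖ := norm_pos_iff.mpr hz
      rw [← Real.rpow_natCast ‖z‖ 2, ← Real.rpow_mul (norm_nonneg z)]
      congr 1
      push_cast
      rw [hp]; ring
  set L := Filter.comap (fun x : EuclideanSpace ℝ (Fin n) => ‖x‖) Filter.atTop with hL
  have hnormT : Tendsto (fun x : EuclideanSpace ℝ (Fin n) => ‖x‖) L atTop := tendsto_comap
  have hev1 : ∀ᶠ x in L, max R 1 ≤ ‖x‖ := hnormT.eventually (eventually_ge_atTop _)
  -- pointwise identity
  have hpt : ∀ x : EuclideanSpace ℝ (Fin n), max R 1 ≤ ‖x‖ →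
      ‖x‖ ^ ((n : ℝ) - 2) * (-laplacian v x) =
      (2 * (n : ℝ) - 8) * g ((‖x‖ ^ 2)⁻¹ • x)
        + 4 * fderiv ℝ g ((‖x‖ ^ 2)⁻¹ • x) ((‖x‖ ^ 2)⁻¹ • x)
        - (‖x‖ ^ 2)⁻¹ * ∑ i : Fin n, fderiv ℝ (fderiv ℝ g) ((‖x‖ ^ 2)⁻¹ • x)
            (EuclideanSpace.single i 1 - (2 * x i) • ((‖x‖ ^ 2)⁻¹ • x))
            (EuclideanSpace.single i 1 - (2 * x i) • ((‖x‖ ^ 2)⁻¹ • x)) := by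
    intro x hx
    have hx1 : (1 : ℝ) ≤ ‖x‖ := le_trans (le_max_right R 1) hx
    have hxn : 0 < ‖x‖ := lt_of_lt_of_le one_pos hx1
    have hxne : x ≠ 0 := norm_pos_iff.mp hxn
    have hyV : (‖x‖ ^ 2)⁻¹ • x ∈ V := hdef x (le_trans (le_max_left R 1) hx)
    have hr2pos : (0 : ℝ) < ‖x‖ ^ 2 := by positivity
    have hr2ne : (‖x‖ ^ 2 : ℝ) ≠ 0 := hr2pos.ne'
    rw [laplacian_formula hV hg p hv' hxne hyV hp2]
    have key : ‖x‖ ^ ((n : ℝ) - 2) * (‖x‖ ^ 2 : ℝ) ^ (p - 2) = (‖x‖ ^ 2 : ℝ)⁻¹ := by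
      rw [← Real.rpow_natCast ‖x‖ 2, ← Real.rpow_mul (norm_nonneg x),
        ← Real.rpow_add hxn]
      rw [show (n : ℝ) - 2 + (2 : ℕ) * (p - 2) = -((2 : ℕ) * 1) by push_cast; rw [hp]; ring]
      rw [Real.rpow_neg (norm_nonneg x)]
      norm_num
    rw [mul_neg, ← mul_assoc, key]
    field_simp
    ring
  -- limits
  have hy0 : Tendsto (fun x : EuclideanSpace ℝ (Fin n) => (‖x‖ ^ 2)⁻¹ • x) L
      (nhds (0 : EuclideanSpace ℝ (Fin n))) := by
    apply squeeze_zero_norm' (a := fun x : EuclideanSpace ℝ (Fin n) => ‖x‖⁻¹)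
    · filter_upwards [hev1] with x hx
      have hx1 : (1 : ℝ) ≤ ‖x‖ := le_trans (le_max_right R 1) hx
      have hxn : 0 < ‖x‖ := lt_of_lt_of_le one_pos hx1
      rw [norm_smul, norm_inv, norm_pow, norm_norm]
      rw [show (‖x‖ ^ 2)⁻¹ * ‖x‖ = ‖x‖⁻¹ by field_simp]
    · exact hnormT.inv_tendsto_atTop
  have hgy : Tendsto (fun x : EuclideanSpace ℝ (Fin n) => g ((‖x‖ ^ 2)⁻¹ • x)) L
      (nhds (g 0)) :=
    ((hg.continuousOn.continuousAt (hV.mem_nhds h0V)).tendsto).comp hy0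
  have hDcont : ContinuousAt (fderiv ℝ g) 0 :=
    (hg.continuousOn_fderiv_of_isOpen hV (by simp)).continuousAt (hV.mem_nhds h0V)
  have hDy : Tendsto (fun x : EuclideanSpace ℝ (Fin n) => fderiv ℝ g ((‖x‖ ^ 2)⁻¹ • x)) L
      (nhds (fderiv ℝ g 0)) := hDcont.tendsto.comp hy0
  have happly : Continuous (fun q : (EuclideanSpace ℝ (Fin n) →L[ℝ] ℝ) × EuclideanSpace ℝ (Fin n)
      => q.1 q.2) := isBoundedBilinearMap_apply.continuous
  have hDyy : Tendsto (fun x : EuclideanSpace ℝ (Fin n) =>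
      fderiv ℝ g ((‖x‖ ^ 2)⁻¹ • x) ((‖x‖ ^ 2)⁻¹ • x)) L (nhds 0) := by
    have h1 := (happly.tendsto ((fderiv ℝ g 0), (0 : EuclideanSpace ℝ (Fin n)))).comp
      (hDy.prodMk_nhds hy0)
    simpa only [Function.comp_def, ContinuousLinearMap.map_zero] using h1
  have hgB : ContDiffOn ℝ (⊤ : ℕ∞) (fderiv ℝ g) V := hg.fderiv_of_isOpen hV (by simp)
  have hBy : Tendsto (fun x : EuclideanSpace ℝ (Fin n) =>
      fderiv ℝ (fderiv ℝ g) ((‖x‖ ^ 2)⁻¹ • x)) L (nhds (fderiv ℝ (fderiv ℝ g) 0)) :=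
    (((hgB.continuousOn_fderiv_of_isOpen hV (by simp)).continuousAt
      (hV.mem_nhds h0V)).tendsto).comp hy0
  have hr2inv : Tendsto (fun x : EuclideanSpace ℝ (Fin n) => ((‖x‖ ^ 2 : ℝ))⁻¹) L (nhds 0) := by
    have h1 : Tendsto (fun x : EuclideanSpace ℝ (Fin n) => (‖x‖ ^ 2 : ℝ)) L atTop :=
      (tendsto_pow_atTop (two_ne_zero)).comp hnormT
    exact h1.inv_tendsto_atTop
  have hSterm : Tendsto (fun x : EuclideanSpace ℝ (Fin n) =>
      (‖x‖ ^ 2)⁻¹ * ∑ i : Fin n, fderiv ℝ (fderiv ℝ g) ((‖x‖ ^ 2)⁻¹ • x)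
        (EuclideanSpace.single i 1 - (2 * x i) • ((‖x‖ ^ 2)⁻¹ • x))
        (EuclideanSpace.single i 1 - (2 * x i) • ((‖x‖ ^ 2)⁻¹ • x))) L (nhds 0) := by
    apply squeeze_zero_norm' (a := fun x : EuclideanSpace ℝ (Fin n) =>
      (‖x‖ ^ 2)⁻¹ * ((n : ℝ) * (9 * ‖fderiv ℝ (fderiv ℝ g) ((‖x‖ ^ 2)⁻¹ • x)‖)))
    · filter_upwards [hev1] with x hx
      have hx1 : (1 : ℝ) ≤ ‖x‖ := le_trans (le_max_right R 1) hx
      have hxn : 0 < ‖x‖ := lt_of_lt_of_le one_pos hx1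
      have hr2pos : (0 : ℝ) < ‖x‖ ^ 2 := by positivity
      have hyn : ‖(‖x‖ ^ 2)⁻¹ • x‖ = ‖x‖⁻¹ := by
        rw [norm_smul, norm_inv, norm_pow, norm_norm]
        field_simp
      have hAle : ∀ i : Fin n,
          ‖EuclideanSpace.single i (1:ℝ) - (2 * x i) • ((‖x‖ ^ 2)⁻¹ • x)‖ ≤ 3 := by
        intro i
        have h1 : |x i| ≤ ‖x‖ := by
          have h2 := abs_real_inner_le_norm x (EuclideanSpace.single i (1 : ℝ))
          simpa [EuclideanSpace.inner_single_right] using h2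
        have hsn : ‖EuclideanSpace.single i (1:ℝ)‖ = (1:ℝ) := by
          rw [EuclideanSpace.norm_single]; norm_num
        have h2 : ‖(2 * x i) • ((‖x‖ ^ 2)⁻¹ • x)‖ = |2 * x i| * ‖x‖⁻¹ := by
          rw [norm_smul, hyn, Real.norm_eq_abs]
        have h3 : |2 * x i| * ‖x‖⁻¹ ≤ 2 := by
          have habs : |2 * x i| ≤ 2 * ‖x‖ := by
            rw [abs_mul, abs_two]; linarith
          have hinv : (0:ℝ) ≤ ‖x‖⁻¹ := by positivity
          have hmul : |2 * x i| * ‖x‖⁻¹ ≤ (2 * ‖x‖) * ‖x‖⁻¹ :=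
            mul_le_mul_of_nonneg_right habs hinv
          have heq : (2 * ‖x‖) * ‖x‖⁻¹ = 2 := by field_simp
          linarith
        have h4 := norm_sub_le (EuclideanSpace.single i (1:ℝ)) ((2 * x i) • ((‖x‖ ^ 2)⁻¹ • x))
        rw [hsn, h2] at h4
        linarith
      set Bx := fderiv ℝ (fderiv ℝ g) ((‖x‖ ^ 2)⁻¹ • x) with hBx
      have hterm : ∀ i : Fin n,
          |Bx (EuclideanSpace.single i 1 - (2 * x i) • ((‖x‖ ^ 2)⁻¹ • x))
            (EuclideanSpace.single i 1 - (2 * x i) • ((‖x‖ ^ 2)⁻¹ • x))| ≤ 9 * ‖Bx‖ := by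
        intro i
        set a := EuclideanSpace.single i (1:ℝ) - (2 * x i) • ((‖x‖ ^ 2)⁻¹ • x) with ha
        calc |Bx a a| ≤ ‖Bx a‖ * ‖a‖ := (Bx a).le_opNorm a
          _ ≤ (‖Bx‖ * ‖a‖) * ‖a‖ := by
              have := Bx.le_opNorm a
              nlinarith [norm_nonneg a, norm_nonneg (Bx a)]
          _ = ‖Bx‖ * (‖a‖ * ‖a‖) := by ring
          _ ≤ ‖Bx‖ * 9 := by
              have h3 := hAle i
              have h9 : ‖a‖ * ‖a‖ ≤ 9 := by nlinarith [norm_nonneg a]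
              exact mul_le_mul_of_nonneg_left h9 Bx.opNorm_nonneg
          _ = 9 * ‖Bx‖ := by ring
      calc ‖(‖x‖ ^ 2)⁻¹ * ∑ i : Fin n, Bx (EuclideanSpace.single i 1 - (2 * x i) • ((‖x‖ ^ 2)⁻¹ • x)) (EuclideanSpace.single i 1 - (2 * x i) • ((‖x‖ ^ 2)⁻¹ • x))‖
          = (‖x‖ ^ 2)⁻¹ * |∑ i : Fin n, Bx (EuclideanSpace.single i 1 - (2 * x i) • ((‖x‖ ^ 2)⁻¹ • x)) (EuclideanSpace.single i 1 - (2 * x i) • ((‖x‖ ^ 2)⁻¹ • x))| := by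
            rw [Real.norm_eq_abs, abs_mul, abs_of_nonneg (by positivity : (0:ℝ) ≤ (‖x‖^2)⁻¹)]
        _ ≤ (‖x‖ ^ 2)⁻¹ * ((n : ℝ) * (9 * ‖Bx‖)) := by
            have hs : |∑ i : Fin n, Bx (EuclideanSpace.single i 1 - (2 * x i) • ((‖x‖ ^ 2)⁻¹ • x)) (EuclideanSpace.single i 1 - (2 * x i) • ((‖x‖ ^ 2)⁻¹ • x))| ≤ (n : ℝ) * (9 * ‖Bx‖) := by
              calc |∑ i : Fin n, Bx (EuclideanSpace.single i 1 - (2 * x i) • ((‖x‖ ^ 2)⁻¹ • x)) (EuclideanSpace.single i 1 - (2 * x i) • ((‖x‖ ^ 2)⁻¹ • x))|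
                  ≤ ∑ i : Fin n, |Bx (EuclideanSpace.single i 1 - (2 * x i) • ((‖x‖ ^ 2)⁻¹ • x)) (EuclideanSpace.single i 1 - (2 * x i) • ((‖x‖ ^ 2)⁻¹ • x))| :=
                    Finset.abs_sum_le_sum_abs _ _
                _ ≤ ∑ _i : Fin n, 9 * ‖Bx‖ := Finset.sum_le_sum (fun i _ => hterm i)
                _ = (n : ℝ) * (9 * ‖Bx‖) := by
                    rw [Finset.sum_const, Finset.card_univ, Fintype.card_fin, nsmul_eq_mul]
            have hnn : (0:ℝ) ≤ (‖x‖^2)⁻¹ := by positivity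
            exact mul_le_mul_of_nonneg_left hs hnn
    · have h2 : Tendsto (fun x : EuclideanSpace ℝ (Fin n) =>
          (n : ℝ) * (9 * ‖fderiv ℝ (fderiv ℝ g) ((‖x‖ ^ 2)⁻¹ • x)‖)) L
          (nhds ((n : ℝ) * (9 * ‖fderiv ℝ (fderiv ℝ g) 0‖))) :=
        by have := (continuous_norm.tendsto (fderiv ℝ (fderiv ℝ g) 0)).comp hBy; exact (this.const_mul 9).const_mul (n : ℝ)
      have h3 := hr2inv.mul h2
      simpa using h3
  have htendh : Tendsto (fun x : EuclideanSpace ℝ (Fin n) =>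
      (2 * (n : ℝ) - 8) * g ((‖x‖ ^ 2)⁻¹ • x)
        + 4 * fderiv ℝ g ((‖x‖ ^ 2)⁻¹ • x) ((‖x‖ ^ 2)⁻¹ • x)
        - (‖x‖ ^ 2)⁻¹ * ∑ i : Fin n, fderiv ℝ (fderiv ℝ g) ((‖x‖ ^ 2)⁻¹ • x)
            (EuclideanSpace.single i 1 - (2 * x i) • ((‖x‖ ^ 2)⁻¹ • x))
            (EuclideanSpace.single i 1 - (2 * x i) • ((‖x‖ ^ 2)⁻¹ • x))) L
      (nhds (2 * ((n : ℝ) - 4) * g 0)) := by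
    have h1 := ((hgy.const_mul (2 * (n : ℝ) - 8)).add (hDyy.const_mul 4)).sub hSterm
    have h2 : (2 * (n : ℝ) - 8) * g 0 + 4 * 0 - 0 = 2 * ((n : ℝ) - 4) * g 0 := by ring
    rw [h2] at h1
    exact h1
  have htend : Filter.Tendsto
      (fun x : EuclideanSpace ℝ (Fin n) => ‖x‖ ^ ((n : ℝ) - 2) * (-laplacian v x)) L
      (nhds (2 * ((n : ℝ) - 4) * g 0)) := by
    apply Tendsto.congr' _ htendh
    filter_upwards [hev1] with x hx
    exact (hpt x hx).symm
  refine ⟨htend, ?_⟩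
  intro hg0
  have hposlim : 0 < 2 * ((n : ℝ) - 4) * g 0 := by nlinarith
  have hev2 : ∀ᶠ x in L, 0 < ‖x‖ ^ ((n : ℝ) - 2) * (-laplacian v x) :=
    htend.eventually (eventually_gt_nhds hposlim)
  have hev3 := hev2.and hev1
  rw [hL, Filter.eventually_comap] at hev3
  obtain ⟨M, hM⟩ := Filter.eventually_atTop.mp hev3
  refine ⟨M, fun x hxM => ?_⟩
  obtain ⟨hpos, hmax⟩ := hM ‖x‖ hxM x rfl
  have hx1 : (1 : ℝ) ≤ ‖x‖ := le_trans (le_max_right R 1) hmax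
  have hxn : 0 < ‖x‖ := lt_of_lt_of_le one_pos hx1
  have hrp : 0 < ‖x‖ ^ ((n : ℝ) - 2) := Real.rpow_pos_of_pos hxn _
  rcases mul_pos_iff.mp hpos with ⟨_, h2⟩ | ⟨h1, _⟩
  · exact h2
  · linarith
end

section
/- Let n ≥ 5 be an integer, let K ⊂ ℝⁿ be a compact set, and let v be a smooth, strictly positive function on ℝⁿ \ K such that the Kelvin transform y ↦ |y|^{4−n} v(y/|y|²) extends to a smooth function on an open neighborhood of the origin in ℝⁿ whose value at 0 is positive. Set w = −Δv on ℝⁿ \ K. Then there exist constants C₀ > 0 and C₁ > 0 such that ∂v/∂xₙ(x) < 0 and ∂w/∂xₙ(x) < 0 for every x ∈ ℝⁿ with |x| ≥ C₁ and xₙ ≥ C₀. -/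
open MeasureTheory Metric Filter Set
open scoped ENNReal NNReal

/-- The partial derivative `∂f/∂xᵢ(x)`. -/
noncomputable def partialDeriv' {n : ℕ} (i : Fin n) (f : EuclideanSpace ℝ (Fin n) → ℝ)
    (x : EuclideanSpace ℝ (Fin n)) : ℝ :=
  deriv (fun t : ℝ => f (x + t • EuclideanSpace.single i (1 : ℝ))) 0

noncomputable section MP
open scoped RealInnerProductSpace
variable {n : ℕ}

local notation "E" => EuclideanSpace ℝ (Fin n)

def sgl (i : Fin n) : E := EuclideanSpace.single i (1:ℝ)

def nq (z : E) : ℝ := ‖z‖ ^ 2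

def iot (z : E) : E := (nq z)⁻¹ • z

lemma nq_nonneg (z : E) : 0 ≤ nq z := sq_nonneg _
lemma nq_pos {z : E} (hz : z ≠ 0) : 0 < nq z := by
  have h := norm_pos_iff.2 hz
  exact pow_pos h 2

lemma hasFDerivAt_nq (z : E) : HasFDerivAt nq (2 • innerSL ℝ z) z :=
  (hasStrictFDerivAt_norm_sq z).hasFDerivAt

lemma hasFDerivAt_nq_rpow {z : E} (hz : z ≠ 0) (p : ℝ) :
    HasFDerivAt (fun w => nq w ^ p) ((p * nq z ^ (p - 1)) • (2 • innerSL ℝ z)) z := by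
  have h := (Real.hasDerivAt_rpow_const (x := nq z) (p := p) (Or.inl (nq_pos hz).ne'))
  exact h.comp_hasFDerivAt z (hasFDerivAt_nq z)

/-- The derivative of the inversion map `iot`. -/
def Jmap (z : E) : E →L[ℝ] E :=
  (nq z)⁻¹ • ContinuousLinearMap.id ℝ E - ((nq z) ^ 2)⁻¹ • ((2 • innerSL ℝ z).smulRight z)

lemma Jmap_apply (z u : E) :
    Jmap z u = (nq z)⁻¹ • u - (2 * ⟪z, u⟫ * ((nq z) * (nq z))⁻¹) • z := by
  simp [Jmap, ContinuousLinearMap.smul_apply, ContinuousLinearMap.smulRight_apply, sq,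
    smul_smul]
  ring

lemma hasFDerivAt_iot {z : E} (hz : z ≠ 0) : HasFDerivAt iot (Jmap z) z := by
  have hc : HasFDerivAt (fun w => (nq w)⁻¹) ((-(nq z ^ 2)⁻¹) • (2 • innerSL ℝ z)) z :=
    (hasDerivAt_inv (nq_pos hz).ne').comp_hasFDerivAt z (hasFDerivAt_nq z)
  have := hc.smul (hasFDerivAt_id z)
  refine this.congr_fderiv ?_; symm
  ext u
  simp [Jmap, ContinuousLinearMap.smul_apply, ContinuousLinearMap.smulRight_apply]
  ring


-- rpow helpers
lemma rpow_h1 {a : ℝ} (ha : 0 < a) (p : ℝ) : a ^ p * a⁻¹ = a ^ (p - 1) := by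
  rw [← Real.rpow_neg_one a, ← Real.rpow_add ha]; ring_nf

lemma rpow_h2 {a : ℝ} (ha : 0 < a) (p : ℝ) : a ^ p * (a * a)⁻¹ = a ^ (p - 2) := by
  rw [mul_inv, ← mul_assoc, rpow_h1 ha, rpow_h1 ha]; ring_nf

lemma rpow_h3 {a : ℝ} (ha : 0 < a) (p : ℝ) : a ^ p * a = a ^ (p + 1) := by
  nth_rewrite 2 [← Real.rpow_one a]
  rw [← Real.rpow_add ha]

/-- The Kelvin-type transform with exponent `p` on `nq`. -/
def Phi (p : ℝ) (g : E → ℝ) (z : E) : ℝ := nq z ^ p * g (iot z)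

/-- Candidate Fréchet derivative of `Phi`. -/
def PhiD (p : ℝ) (g : E → ℝ) (z : E) : E →L[ℝ] ℝ :=
  g (iot z) • ((p * nq z ^ (p - 1)) • (2 • innerSL ℝ z)) +
    (nq z ^ p) • ((fderiv ℝ g (iot z)).comp (Jmap z))

lemma hasFDerivAt_Phi {p : ℝ} {g : E → ℝ} {z : E} (hz : z ≠ 0)
    (hg : DifferentiableAt ℝ g (iot z)) :
    HasFDerivAt (Phi p g) (PhiD p g z) z := by
  have h1 := hasFDerivAt_nq_rpow hz p
  have h2 : HasFDerivAt (fun w => g (iot w)) ((fderiv ℝ g (iot z)).comp (Jmap z)) z :=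
    hg.hasFDerivAt.comp z (hasFDerivAt_iot hz)
  have := h1.mul h2
  refine this.congr_fderiv ?_; symm
  rw [PhiD, add_comm]

/-- The value `PhiD p g z (sgl i)`, in expanded scalar form. -/
def Psi (p : ℝ) (g : E → ℝ) (i : Fin n) (z : E) : ℝ :=
  2 * p * (nq z ^ (p - 1) * (z i * g (iot z))) +
    nq z ^ (p - 1) * fderiv ℝ g (iot z) (sgl i) -
    2 * (nq z ^ (p - 2) * (z i * fderiv ℝ g (iot z) z))

lemma inner_sgl (z : E) (i : Fin n) : ⟪z, sgl i⟫ = z i := by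
  simp [sgl, EuclideanSpace.inner_single_right]

lemma PhiD_apply_sgl {p : ℝ} (g : E → ℝ) {z : E} (hz : z ≠ 0) (i : Fin n) :
    PhiD p g z (sgl i) = Psi p g i z := by
  have hq := nq_pos hz
  simp only [PhiD, Psi, ContinuousLinearMap.add_apply, ContinuousLinearMap.smul_apply,
    ContinuousLinearMap.coe_comp', Function.comp_apply, ContinuousLinearMap.coe_smul',
    Pi.smul_apply, innerSL_apply_apply, smul_eq_mul]
  rw [Jmap_apply, inner_sgl, map_sub, ContinuousLinearMap.map_smul, ContinuousLinearMap.map_smul]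
  have e1 : nq z ^ p * (nq z)⁻¹ = nq z ^ (p - 1) := rpow_h1 hq p
  have e2 : nq z ^ p * ((nq z) * (nq z))⁻¹ = nq z ^ (p - 2) := rpow_h2 hq p
  simp only [smul_eq_mul, nsmul_eq_mul, Nat.cast_ofNat]
  linear_combination (fderiv ℝ g (iot z) (sgl i)) * e1 - 2 * z i * (fderiv ℝ g (iot z) z) * e2


lemma hasDerivAt_lineMap (x : E) (u : E) (t : ℝ) :
    HasDerivAt (fun s : ℝ => x + s • u) u t := by
  simpa using ((hasDerivAt_id t).smul_const u).const_add x

lemma line_zero (x : E) (u : E) : x + (0:ℝ) • u = x := by simp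

lemma sgl_apply_self (i : Fin n) : sgl i i = 1 := by simp [sgl]

lemma sum_mul_sgl (x : E) (i : Fin n) : (∑ j, x j * sgl i j) = x i := by
  simp [sgl, EuclideanSpace.single_apply]

lemma line_apply_self (x : E) (i : Fin n) (s : ℝ) : (x + s • sgl i) i = x i + s := by
  simp [sgl, PiLp.add_apply, PiLp.smul_apply]

/-- first derivative of `Phi` along a coordinate line -/
lemma hasDerivAt_line_Phi {p : ℝ} {g : E → ℝ} {i : Fin n} {x : E} {t : ℝ}
    (hz : x + t • sgl i ≠ 0) (hdg : DifferentiableAt ℝ g (iot (x + t • sgl i))) :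
    HasDerivAt (fun s : ℝ => Phi p g (x + s • sgl i)) (Psi p g i (x + t • sgl i)) t := by
  have hF := hasFDerivAt_Phi (p := p) hz hdg
  have := hF.comp_hasDerivAt t (hasDerivAt_lineMap x (sgl i) t)
  rw [PhiD_apply_sgl g hz i] at this; exact this

/-- the explicit second-order coefficient -/
def Xi (p : ℝ) (g : E → ℝ) (i : Fin n) (x : E) : ℝ :=
  2*p*( ((p-1) * nq x ^ (p-2) * (2 * x i)) * (x i * g (iot x))
      + nq x ^ (p-1) * (x i * (fderiv ℝ g (iot x) (Jmap x (sgl i))) + g (iot x)) )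
  + ( ((p-1) * nq x ^ (p-2) * (2 * x i)) * (fderiv ℝ g (iot x) (sgl i))
      + nq x ^ (p-1) * ((fderiv ℝ (fderiv ℝ g) (iot x) (Jmap x (sgl i))) (sgl i)) )
  - 2*( ((p-2) * nq x ^ (p-3) * (2 * x i)) * (x i * (fderiv ℝ g (iot x) x))
      + nq x ^ (p-2) * (x i * ((fderiv ℝ (fderiv ℝ g) (iot x) (Jmap x (sgl i))) x
                               + (fderiv ℝ g (iot x)) (sgl i)) + (fderiv ℝ g (iot x)) x) )

lemma hasDerivAt_line_Psi {p : ℝ} {g : E → ℝ} {i : Fin n} {x : E}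
    (hx : x ≠ 0) (hdg : DifferentiableAt ℝ g (iot x))
    (hdG : DifferentiableAt ℝ (fderiv ℝ g) (iot x)) :
    HasDerivAt (fun s : ℝ => Psi p g i (x + s • sgl i)) (Xi p g i x) 0 := by
  have hline := hasDerivAt_lineMap x (sgl i) 0
  have hx0 : x = x + (0:ℝ) • sgl i := by simp
  -- atoms
  have hnq : ∀ r : ℝ, HasDerivAt (fun s : ℝ => nq (x + s • sgl i) ^ r)
      ((r * nq x ^ (r-1)) * (2 * x i)) 0 := by
    intro r
    have := (hasFDerivAt_nq_rpow hx r).comp_hasDerivAt_of_eq 0 hline hx0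
    simpa [Function.comp_def, smul_eq_mul, mul_assoc, sum_mul_sgl, inner_sgl] using this
  have hcoord : HasDerivAt (fun s : ℝ => (x + s • sgl i) i) 1 0 := by
    simp only [line_apply_self]
    simpa using (hasDerivAt_id (0:ℝ)).const_add (x i)
  have hiot : HasFDerivAt (fun z : E => g (iot z)) ((fderiv ℝ g (iot x)).comp (Jmap x)) x :=
    hdg.hasFDerivAt.comp x (hasFDerivAt_iot hx)
  have hg' : HasDerivAt (fun s : ℝ => g (iot (x + s • sgl i)))
      (fderiv ℝ g (iot x) (Jmap x (sgl i))) 0 := by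
    exact hiot.comp_hasDerivAt_of_eq 0 hline hx0
  have hGiot : HasFDerivAt (fun z : E => fderiv ℝ g (iot z))
      ((fderiv ℝ (fderiv ℝ g) (iot x)).comp (Jmap x)) x :=
    hdG.hasFDerivAt.comp x (hasFDerivAt_iot hx)
  have hd : HasDerivAt (fun s : ℝ => (fderiv ℝ g (iot (x + s • sgl i))) (sgl i))
      ((fderiv ℝ (fderiv ℝ g) (iot x) (Jmap x (sgl i))) (sgl i)) 0 := by
    have := (hGiot.clm_apply (hasFDerivAt_const (sgl i) x)).comp_hasDerivAt_of_eq 0 hline hx0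
    simpa [Function.comp_def] using this
  have he : HasDerivAt (fun s : ℝ => (fderiv ℝ g (iot (x + s • sgl i))) (x + s • sgl i))
      ((fderiv ℝ g (iot x)) (sgl i) + (fderiv ℝ (fderiv ℝ g) (iot x) (Jmap x (sgl i))) x) 0 := by
    have := (hGiot.clm_apply (hasFDerivAt_id x)).comp_hasDerivAt_of_eq 0 hline hx0
    simpa only [Function.comp_def, ContinuousLinearMap.add_apply, ContinuousLinearMap.coe_comp',
      Function.comp_apply, ContinuousLinearMap.flip_apply, ContinuousLinearMap.coe_id',
      id_eq] using this
  have hcomb := ((((hnq (p-1)).mul (hcoord.mul hg')).const_mul (2*p)).add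
      ((hnq (p-1)).mul hd)).sub ((((hnq (p-2)).mul (hcoord.mul he))).const_mul 2)
  rw [← hx0] at hcomb
  refine hcomb.congr_deriv ?_; symm
  have e1 : p - 1 - 1 = p - 2 := by ring
  have e2 : p - 2 - 1 = p - 3 := by ring
  rw [Xi, e1, e2]; simp only [Pi.mul_apply, line_zero]; ring


lemma sum_smul_sgl (x : E) : ∑ i, x i • sgl i = x := by
  ext j
  have : (∑ i, x i • sgl i) j = ∑ i, (x i • sgl i) j := by
    rw [WithLp.ofLp_sum, Finset.sum_apply]
  rw [this]
  simp [sgl, EuclideanSpace.single_apply]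

lemma clm_sum_eval {F : Type*} [NormedAddCommGroup F] [NormedSpace ℝ F]
    (T : E →L[ℝ] F) (x : E) : ∑ i, x i • T (sgl i) = T x :=
  calc ∑ i, x i • T (sgl i) = ∑ i, T (x i • sgl i) := by
        simp only [ContinuousLinearMap.map_smul]
    _ = T (∑ i, x i • sgl i) := (map_sum T _ _).symm
    _ = T x := by rw [sum_smul_sgl]

lemma clm_sum_eval' (T : E →L[ℝ] ℝ) (x : E) : ∑ i, x i * T (sgl i) = T x := by
  simpa [smul_eq_mul] using clm_sum_eval T x

lemma sum_sq_eq_nq (x : E) : ∑ i, x i * x i = nq x := by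
  have : (∑ i, x i * x i) = ⟪x, x⟫ := by
    rw [PiLp.inner_apply]; simp [RCLike.inner_apply, sq]
  rw [this, real_inner_self_eq_norm_sq, nq]

lemma nq_iot (x : E) (hx : x ≠ 0) : nq (iot x) = (nq x)⁻¹ := by
  have hq := nq_pos hx
  rw [iot, nq, norm_smul]
  rw [nq] at hq ⊢
  rw [mul_pow, norm_inv, Real.norm_eq_abs, abs_of_pos hq]
  field_simp

lemma x_eq_nq_smul_iot (x : E) (hx : x ≠ 0) : x = nq x • iot x := by
  rw [iot, smul_smul, mul_inv_cancel₀ (nq_pos hx).ne', one_smul]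

/-- The function appearing in `-Δ(Phi p g) = Phi (p-1) (-ell p g)`. -/
def ell (nn : ℕ) (p : ℝ) (g : E → ℝ) (y : E) : ℝ :=
  (4*p*(p-1) + 2*p*(nn:ℝ)) * g y + (4 - 4*p - 2*(nn:ℝ)) * (fderiv ℝ g y) y +
    nq y * ∑ i, (fderiv ℝ (fderiv ℝ g) y (sgl i)) (sgl i)

lemma Xi_sum {p : ℝ} {g : E → ℝ} {x : E} (hx : x ≠ 0) :
    ∑ i, Xi p g i x = nq x ^ (p - 1) * ell n p g (iot x) := by
  have hq := nq_pos hx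
  set y := iot x with hy
  set G := fderiv ℝ g y with hG
  set H := fderiv ℝ (fderiv ℝ g) y with hH
  set q : ℝ := nq x with hqd
  set c1 : ℝ := 4*p*(p-1)*q^(p-2)*(g y) - 4*p*(q^(p-1)*(q*q)⁻¹)*(G x)
      - 4*(p-2)*q^(p-3)*(G x) + 4*(q^(p-2)*(q*q)⁻¹)*(H x x) with hc1
  set c2 : ℝ := 2*p*q^(p-1)*(g y) - 2*q^(p-2)*(G x) with hc2
  set c3 : ℝ := 2*p*(q^(p-1)*q⁻¹) + 2*(p-1)*q^(p-2) - 2*q^(p-2) with hc3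
  set c4 : ℝ := q^(p-1)*q⁻¹ with hc4
  set c5 : ℝ := -(2*(q^(p-1)*(q*q)⁻¹)) with hc5
  set c6 : ℝ := -(2*(q^(p-2)*q⁻¹)) with hc6
  have key : ∀ i, Xi p g i x = c1 * (x i * x i) + c2 + c3 * (x i * G (sgl i))
      + c4 * (H (sgl i) (sgl i)) + c5 * (x i * ((H x) (sgl i)))
      + c6 * (x i * ((H (sgl i)) x)) := by
    intro i
    have hJG : G (Jmap x (sgl i)) =
        q⁻¹ * G (sgl i) - (2 * x i * (q*q)⁻¹) * G x := by
      rw [Jmap_apply, inner_sgl, map_sub, ContinuousLinearMap.map_smul,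
        ContinuousLinearMap.map_smul]
      simp [smul_eq_mul, ← hqd]
    have hJH : H (Jmap x (sgl i)) =
        q⁻¹ • H (sgl i) - (2 * x i * (q*q)⁻¹) • H x := by
      rw [Jmap_apply, inner_sgl, map_sub, ContinuousLinearMap.map_smul,
        ContinuousLinearMap.map_smul]
    have hJH1 : (H (Jmap x (sgl i))) (sgl i) =
        q⁻¹ * ((H (sgl i)) (sgl i)) - (2 * x i * (q*q)⁻¹) * ((H x) (sgl i)) := by
      rw [hJH]; simp [smul_eq_mul]
    have hJH2 : (H (Jmap x (sgl i))) x =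
        q⁻¹ * ((H (sgl i)) x) - (2 * x i * (q*q)⁻¹) * ((H x) x) := by
      rw [hJH]; simp [smul_eq_mul]
    rw [Xi, ← hy, ← hG, ← hH, ← hqd, hJG, hJH1, hJH2, hc1, hc2, hc3, hc4, hc5, hc6]
    ring
  rw [Finset.sum_congr rfl (fun i _ => key i)]
  simp only [Finset.sum_add_distrib, ← Finset.mul_sum, Finset.sum_const, Finset.card_univ,
    Fintype.card_fin, nsmul_eq_mul]
  rw [sum_sq_eq_nq, clm_sum_eval' G x, ← hqd]
  have hHx : ∑ i, x i * ((H x) (sgl i)) = (H x) x := clm_sum_eval' (H x) x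
  have hHx2 : ∑ i, x i * ((H (sgl i)) x) = (H x) x := by
    have := clm_sum_eval H x
    calc ∑ i, x i * ((H (sgl i)) x) = ∑ i, ((x i • H (sgl i)) : E →L[ℝ] ℝ) x := by
          simp [ContinuousLinearMap.smul_apply]
      _ = ((∑ i, x i • H (sgl i)) : E →L[ℝ] ℝ) x := by
          rw [ContinuousLinearMap.sum_apply]
      _ = (H x) x := by rw [this]
  rw [hHx, hHx2]
  -- substitute G x and nq y
  have hGx : G x = q * G y := by
    nth_rewrite 1 [x_eq_nq_smul_iot x hx]
    rw [ContinuousLinearMap.map_smul, smul_eq_mul, ← hy, ← hqd]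
  have hny : nq y = q⁻¹ := by rw [hy, nq_iot x hx, hqd]
  rw [ell, ← hG, ← hH, hny]
  -- normalize rpow powers
  have e2 : q ^ (p-3) * q = q ^ (p-2) := by
    rw [rpow_h3 hq, show p-3+1 = p-2 by ring]
  have e1 : q ^ (p-2) * q = q ^ (p-1) := by
    rw [rpow_h3 hq, show p-2+1 = p-1 by ring]
  simp only [hc1, hc2, hc3, hc4, hc5, hc6]
  rw [hGx, ← e1, ← e2]
  field_simp
  ring


lemma eventually_line {U : Set E} (hU : IsOpen U) {x : E} (hx : x ∈ U) (u : E) :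
    ∀ᶠ t : ℝ in nhds 0, x + t • u ∈ U := by
  have hc : Continuous fun t : ℝ => x + t • u := by continuity
  have : U ∈ nhds (x + (0:ℝ) • u) := by simpa using hU.mem_nhds hx
  exact hc.continuousAt.preimage_mem_nhds this

lemma partialDeriv'_congr {f h : E → ℝ} {x : E} {U : Set E} (hU : IsOpen U) (hx : x ∈ U)
    (heq : ∀ z ∈ U, f z = h z) (i : Fin n) : partialDeriv' i f x = partialDeriv' i h x := by
  apply Filter.EventuallyEq.deriv_eq
  filter_upwards [eventually_line hU hx (EuclideanSpace.single i (1:ℝ))] with t ht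
  exact heq _ ht

lemma laplacian_congr {f h : E → ℝ} {x : E} {U : Set E} (hU : IsOpen U) (hx : x ∈ U)
    (heq : ∀ z ∈ U, f z = h z) : laplacian f x = laplacian h x := by
  unfold laplacian
  refine Finset.sum_congr rfl fun i _ => ?_
  apply Filter.EventuallyEq.iteratedDeriv_eq
  filter_upwards [eventually_line hU hx (EuclideanSpace.single i (1:ℝ))] with t ht
  exact heq _ ht

lemma partialDeriv'_Phi {p : ℝ} {g : E → ℝ} {x : E} (i : Fin n) (hx : x ≠ 0)
    (hdg : DifferentiableAt ℝ g (iot x)) :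
    partialDeriv' i (Phi p g) x = Psi p g i x := by
  rw [partialDeriv']
  have hz : x + (0:ℝ) • sgl i ≠ 0 := by simpa using hx
  have hdg' : DifferentiableAt ℝ g (iot (x + (0:ℝ) • sgl i)) := by simpa using hdg
  have := (hasDerivAt_line_Phi (p := p) hz hdg').deriv
  simp only [line_zero] at this; exact this

/-- the good open region -/
def Ureg (V : Set E) : Set E := {z : E | z ≠ 0} ∩ iot ⁻¹' V

lemma Ureg_isOpen {V : Set E} (hV : IsOpen V) : IsOpen (Ureg (n := n) V) := by
  have hcont : ContinuousOn (iot (n := n)) {z : E | z ≠ 0} := by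
    refine ContinuousOn.smul (f := fun z : E => (nq z)⁻¹) (g := id) ?_ continuous_id.continuousOn
    exact ((continuous_norm.pow 2).continuousOn).inv₀ fun z hz => (nq_pos hz).ne'
  exact hcont.isOpen_inter_preimage isOpen_ne hV

lemma laplacian_Phi {p : ℝ} {g : E → ℝ} {V : Set E} (hV : IsOpen V)
    (hg : ContDiffOn ℝ (⊤ : ℕ∞) g V) {x : E} (hx : x ≠ 0) (hxV : iot x ∈ V) :
    laplacian (Phi p g) x = nq x ^ (p - 1) * ell n p g (iot x) := by
  have hGsm : ContDiffOn ℝ (⊤ : ℕ∞) (fderiv ℝ g) V := hg.fderiv_of_isOpen hV (by simp)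
  have hdg : ∀ z : E, iot z ∈ V → DifferentiableAt ℝ g (iot z) := fun z hz =>
    (hg.contDiffAt (hV.mem_nhds hz)).differentiableAt (by simp)
  have hdG : ∀ z : E, iot z ∈ V → DifferentiableAt ℝ (fderiv ℝ g) (iot z) := fun z hz =>
    (hGsm.contDiffAt (hV.mem_nhds hz)).differentiableAt (by simp)
  have hxU : x ∈ Ureg V := ⟨hx, hxV⟩
  rw [laplacian, ← Xi_sum hx]
  refine Finset.sum_congr rfl fun i _ => ?_
  have step1 : deriv (fun t : ℝ => Phi p g (x + t • sgl i)) =ᶠ[nhds 0]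
      (fun s : ℝ => Psi p g i (x + s • sgl i)) := by
    filter_upwards [eventually_line (Ureg_isOpen hV) hxU (sgl i)] with t ht
    exact (hasDerivAt_line_Phi ht.1 (hdg _ ht.2)).deriv
  have : iteratedDeriv 2 (fun t : ℝ => Phi p g (x + t • sgl i)) 0
      = deriv (fun s : ℝ => Psi p g i (x + s • sgl i)) 0 := by
    rw [iteratedDeriv_succ, iteratedDeriv_one]
    exact step1.deriv_eq
  rw [show (fun t : ℝ => Phi p g (x + t • EuclideanSpace.single i (1:ℝ)))
      = fun t : ℝ => Phi p g (x + t • sgl i) from rfl, this]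
  exact (hasDerivAt_line_Psi hx (hdg _ hxV) (hdG _ hxV)).deriv


lemma norm_sgl (i : Fin n) : ‖sgl i‖ = 1 := by
  rw [sgl, EuclideanSpace.norm_single]; norm_num

lemma abs_apply_le_norm (x : E) (i : Fin n) : |x i| ≤ ‖x‖ := by
  have := abs_real_inner_le_norm x (sgl i)
  rwa [inner_sgl, norm_sgl, mul_one] at this

lemma norm_iot {x : E} (hx : x ≠ 0) : ‖iot x‖ = ‖x‖⁻¹ := by
  have hn : (0:ℝ) < ‖x‖ := norm_pos_iff.2 hx
  rw [iot, norm_smul, nq, norm_inv, Real.norm_eq_abs, abs_of_pos (by positivity : (0:ℝ) < ‖x‖^2)]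
  field_simp

/-- Part A: the explicit derivative formula is eventually negative in the upper region. -/
lemma partA {p : ℝ} (hp : p < 0) {g : E → ℝ} {V : Set E} (hV : IsOpen V) (h0V : (0:E) ∈ V)
    (hg : ContDiffOn ℝ (⊤ : ℕ∞) g V) (hg0 : 0 < g 0) (i : Fin n) :
    ∃ C₀ > (0:ℝ), ∃ C₁ > (0:ℝ), ∀ x : E, C₁ ≤ ‖x‖ → C₀ ≤ x i →
      (iot x ∈ V ∧ x ≠ 0) ∧ Psi p g i x < 0 := by
  set M : ℝ := ‖fderiv ℝ g 0‖ + 1 with hM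
  have hMpos : 0 < M := by positivity
  -- find δ
  have hgc : ContinuousAt g 0 := (hg.continuousOn.continuousAt (hV.mem_nhds h0V))
  have hGsm : ContDiffOn ℝ (⊤ : ℕ∞) (fderiv ℝ g) V := hg.fderiv_of_isOpen hV (by simp)
  have hGc : ContinuousAt (fun y => ‖fderiv ℝ g y‖) 0 :=
    ((hGsm.continuousOn.continuousAt (hV.mem_nhds h0V))).norm
  have hev : ∀ᶠ y in nhds (0:E), g 0 / 2 ≤ g y ∧ ‖fderiv ℝ g y‖ ≤ M ∧ y ∈ V := by
    have e1 : ∀ᶠ y in nhds (0:E), g 0 / 2 < g y := hgc.eventually_const_lt (by linarith)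
    have e2 : ∀ᶠ y in nhds (0:E), ‖fderiv ℝ g y‖ < M :=
      hGc.eventually_lt_const (by rw [hM]; linarith)
    filter_upwards [e1, e2, hV.mem_nhds h0V] with y h1 h2 h3
    exact ⟨h1.le, h2.le, h3⟩
  obtain ⟨δ, hδpos, hδ⟩ := Metric.eventually_nhds_iff_ball.1 hev
  refine ⟨(3*M + 1)/((-p) * g 0), div_pos (by linarith) (mul_pos (by linarith) hg0),
    max (2/δ) 1, by positivity, fun x hC1 hC0 => ?_⟩
  set C₀ : ℝ := (3*M + 1)/((-p) * g 0) with hC₀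
  have hxn : (0:ℝ) < ‖x‖ := lt_of_lt_of_le (by positivity) hC1
  have hx : x ≠ 0 := norm_pos_iff.1 hxn
  have hyball : iot x ∈ Metric.ball (0:E) δ := by
    rw [Metric.mem_ball, dist_zero_right, norm_iot hx]
    have h2δ : 2/δ ≤ ‖x‖ := le_trans (le_max_left _ _) hC1
    have : ‖x‖⁻¹ ≤ δ/2 := by
      rw [inv_le_comm₀ hxn (by positivity)]
      calc (δ/2)⁻¹ = 2/δ := by field_simp
        _ ≤ ‖x‖ := h2δ
    calc ‖x‖⁻¹ ≤ δ/2 := this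
      _ < δ := by linarith
  obtain ⟨hgy, hGy, hyV⟩ := hδ _ hyball
  refine ⟨⟨hyV, hx⟩, ?_⟩
  set y := iot x with hy
  set Gy := fderiv ℝ g y with hGyd
  set A : ℝ := nq x ^ (p-1) with hA
  set B : ℝ := nq x ^ (p-2) with hB
  have hq : 0 < nq x := nq_pos hx
  have hApos : 0 < A := Real.rpow_pos_of_pos hq _
  have hBpos : 0 < B := Real.rpow_pos_of_pos hq _
  have hBA : B * nq x = A := by
    rw [hA, hB, rpow_h3 hq, show p-2+1 = p-1 by ring]
  have hC0pos : (0:ℝ) < C₀ := div_pos (by linarith) (mul_pos (by linarith) hg0)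
  have hxipos : (0:ℝ) < x i := lt_of_lt_of_le hC0pos hC0
  -- term 1
  have hxy : C₀ * (g 0 / 2) ≤ x i * g y :=
    mul_le_mul hC0 hgy (by linarith) hxipos.le
  have t1 : 2*p*(A*(x i * g y)) ≤ 2*p*(A*(C₀*(g 0/2))) := by
    have h1 : A*(C₀*(g 0/2)) ≤ A*(x i * g y) := mul_le_mul_of_nonneg_left hxy hApos.le
    exact mul_le_mul_of_nonpos_left h1 (by linarith)
  -- term 2
  have t2 : A * Gy (sgl i) ≤ A * M := by
    apply mul_le_mul_of_nonneg_left _ hApos.le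
    calc Gy (sgl i) ≤ |Gy (sgl i)| := le_abs_self _
      _ ≤ ‖Gy‖ * ‖sgl i‖ := by rw [← Real.norm_eq_abs]; exact Gy.le_opNorm _
      _ ≤ M := by rw [norm_sgl, mul_one]; exact hGy
  -- term 3
  have hGyx : |Gy x| ≤ M * ‖x‖ := by
    calc |Gy x| ≤ ‖Gy‖ * ‖x‖ := by rw [← Real.norm_eq_abs]; exact Gy.le_opNorm _
      _ ≤ M * ‖x‖ := mul_le_mul_of_nonneg_right hGy (norm_nonneg _)
  have h3a : |x i * Gy x| ≤ ‖x‖ * (M * ‖x‖) := by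
    rw [abs_mul]
    exact mul_le_mul (abs_apply_le_norm x i) hGyx (abs_nonneg _) hxn.le
  have t3 : -(2*(B*(x i * Gy x))) ≤ 2*M*A := by
    have h1 : -(‖x‖ * (M * ‖x‖)) ≤ x i * Gy x := by
      have := neg_abs_le (x i * Gy x); linarith [h3a]
    have h2 : B * (-(‖x‖ * (M * ‖x‖))) ≤ B * (x i * Gy x) :=
      mul_le_mul_of_nonneg_left h1 hBpos.le
    have h3 : ‖x‖ * ‖x‖ = nq x := by rw [nq]; ring
    have h4 : B * (‖x‖ * (M * ‖x‖)) = M * A := by rw [← hBA, ← h3]; ring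
    linarith [h2]
  -- conclude
  have hkey : p * C₀ * g 0 = -(3*M+1) := by
    have hpne : p ≠ 0 := ne_of_lt hp
    have hgne : g 0 ≠ 0 := ne_of_gt hg0
    rw [hC₀]
    field_simp
  rw [Psi, ← hy, ← hGyd, ← hA, ← hB]
  nlinarith [t1, t2, t3, hApos, hkey]


lemma iot_ne_zero {z : E} (hz : z ≠ 0) : iot z ≠ 0 :=
  smul_ne_zero (inv_ne_zero (nq_pos hz).ne') hz

lemma iot_iot {z : E} (hz : z ≠ 0) : iot (iot z) = z := by
  rw [show iot (iot z) = (nq (iot z))⁻¹ • iot z from rfl, nq_iot z hz, inv_inv,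
    show iot z = (nq z)⁻¹ • z from rfl, smul_smul, mul_inv_cancel₀ (nq_pos hz).ne', one_smul]

lemma ell_smooth {g : E → ℝ} {V : Set E} (hV : IsOpen V) (hg : ContDiffOn ℝ (⊤ : ℕ∞) g V) (p : ℝ) :
    ContDiffOn ℝ (⊤ : ℕ∞) (fun y => -(ell n p g y)) V := by
  have hG : ContDiffOn ℝ (⊤ : ℕ∞) (fderiv ℝ g) V := hg.fderiv_of_isOpen hV (by simp)
  have hH : ContDiffOn ℝ (⊤ : ℕ∞) (fderiv ℝ (fderiv ℝ g)) V := hG.fderiv_of_isOpen hV (by simp)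
  apply ContDiffOn.neg
  apply ContDiffOn.add
  apply ContDiffOn.add
  · exact (contDiffOn_const.mul hg)
  · exact contDiffOn_const.mul (hG.clm_apply contDiffOn_id)
  · refine ((contDiff_norm_sq ℝ).contDiffOn).mul (ContDiffOn.sum fun i _ => ?_)
    exact (hH.clm_apply contDiffOn_const).clm_apply contDiffOn_const

end MP

/-- Let `v > 0` be smooth on `ℝⁿ \ K`, `K` compact, `n ≥ 5`, whose Kelvin transform
`y ↦ |y|^{4−n} v(y/|y|²)` extends smoothly through the origin with positive value at `0`,
and set `w = −Δv`. Then there are `C₀, C₁ > 0` so that `∂v/∂xₙ < 0` and `∂w/∂xₙ < 0`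
at every `x` with `|x| ≥ C₁` and `xₙ ≥ C₀`. -/
theorem moving_plane_starting_region
    (n : ℕ) (hn : 5 ≤ n)
    (K : Set (EuclideanSpace ℝ (Fin n))) (hK : IsCompact K)
    (v : EuclideanSpace ℝ (Fin n) → ℝ)
    (hv_smooth : ContDiffOn ℝ (⊤ : ℕ∞) v Kᶜ)
    (hv_pos : ∀ x ∉ K, 0 < v x)
    (hkelvin : ∃ (g : EuclideanSpace ℝ (Fin n) → ℝ) (V : Set (EuclideanSpace ℝ (Fin n))),
      IsOpen V ∧ (0 : EuclideanSpace ℝ (Fin n)) ∈ V ∧ ContDiffOn ℝ (⊤ : ℕ∞) g V ∧ 0 < g 0 ∧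
      ∀ y ∈ V, y ≠ 0 → (‖y‖ ^ 2)⁻¹ • y ∉ K ∧
        g y = ‖y‖ ^ (4 - (n : ℝ)) * v ((‖y‖ ^ 2)⁻¹ • y)) :
    ∃ C₀ > (0 : ℝ), ∃ C₁ > (0 : ℝ), ∀ x : EuclideanSpace ℝ (Fin n),
      C₁ ≤ ‖x‖ → C₀ ≤ x ⟨n - 1, by omega⟩ →
        partialDeriv' ⟨n - 1, by omega⟩ v x < 0 ∧
        partialDeriv' ⟨n - 1, by omega⟩ (fun y => -laplacian v y) x < 0 := by
  classical
  obtain ⟨g, V, hVopen, h0V, hgsm, hg0, hprop⟩ := hkelvin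
  set i : Fin n := ⟨n - 1, by omega⟩ with hi
  have hncast : (5:ℝ) ≤ (n:ℝ) := by exact_mod_cast hn
  set p : ℝ := (4 - (n:ℝ))/2 with hpdef
  have hp : p < 0 := by rw [hpdef]; linarith
  have hp1 : p - 1 < 0 := by linarith
  obtain ⟨ε, hεpos, hball⟩ := Metric.isOpen_iff.1 hVopen 0 h0V
  set R : ℝ := ε⁻¹ with hRdef
  have hRpos : 0 < R := by positivity
  set U : Set (EuclideanSpace ℝ (Fin n)) := {z | R < ‖z‖} with hUdef
  have hUopen : IsOpen U := isOpen_lt continuous_const continuous_norm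
  have hzU : ∀ z ∈ U, z ≠ 0 ∧ iot z ∈ V := by
    intro z hz
    have hzn : R < ‖z‖ := hz
    have hz0 : z ≠ 0 := by
      intro h; rw [h, norm_zero] at hzn; exact absurd hzn (not_lt.2 hRpos.le)
    refine ⟨hz0, hball ?_⟩
    rw [Metric.mem_ball, dist_zero_right, norm_iot hz0]
    exact (inv_lt_comm₀ (norm_pos_iff.2 hz0) hεpos).2 (by rwa [← hRdef])
  -- identity v = Phi p g on U
  have hveq : ∀ z ∈ U, v z = Phi p g z := by
    intro z hz
    obtain ⟨hz0, hzV⟩ := hzU z hz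
    have hzpos : (0:ℝ) < ‖z‖ := norm_pos_iff.2 hz0
    obtain ⟨-, heq⟩ := hprop (iot z) hzV (iot_ne_zero hz0)
    have hii : (‖iot z‖ ^ 2)⁻¹ • iot z = z := iot_iot hz0
    rw [hii, norm_iot hz0] at heq
    have hpow : (‖z‖⁻¹) ^ (4-(n:ℝ)) = (‖z‖ ^ (4-(n:ℝ)))⁻¹ := Real.inv_rpow (norm_nonneg z) _
    have hnqp : nq z ^ p = ‖z‖ ^ (4-(n:ℝ)) := by
      rw [nq, ← Real.rpow_natCast ‖z‖ 2, ← Real.rpow_mul (norm_nonneg z)]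
      congr 1
      push_cast
      rw [hpdef]; ring
    have h0 : ‖z‖ ^ (4-(n:ℝ)) ≠ 0 := (Real.rpow_pos_of_pos hzpos _).ne'
    rw [Phi, hnqp, heq, hpow]
    field_simp
  -- the function h for -Δv
  set hfun : EuclideanSpace ℝ (Fin n) → ℝ := fun y => -(ell n p g y) with hhdef
  have hhsm : ContDiffOn ℝ (⊤ : ℕ∞) hfun V := ell_smooth hVopen hgsm p
  have hh0 : 0 < hfun 0 := by
    have hcoef : 4*p*(p-1) + 2*p*(n:ℝ) = 8 - 2*(n:ℝ) := by rw [hpdef]; ring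
    have : hfun 0 = -((4*p*(p-1) + 2*p*(n:ℝ)) * g 0) := by
      rw [hhdef]
      simp [ell, nq]
    rw [this, hcoef]
    nlinarith
  -- identity -Δv = Phi (p-1) hfun on U
  have hweq : ∀ z ∈ U, (fun y => -laplacian v y) z = Phi (p-1) hfun z := by
    intro z hz
    obtain ⟨hz0, hzV⟩ := hzU z hz
    have h1 : laplacian v z = laplacian (Phi p g) z := laplacian_congr hUopen hz hveq
    have h2 := laplacian_Phi (p := p) hVopen hgsm hz0 hzV
    simp only [h1, h2, Phi, hhdef]
    ring
  -- part A applications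
  obtain ⟨C₀a, hC₀a, C₁a, hC₁a, hA⟩ := partA hp hVopen h0V hgsm hg0 i
  obtain ⟨C₀b, hC₀b, C₁b, hC₁b, hB⟩ := partA hp1 hVopen h0V hhsm hh0 i
  refine ⟨max C₀a C₀b, lt_max_of_lt_left hC₀a, max (max C₁a C₁b) (R+1),
    lt_max_of_lt_left (lt_max_of_lt_left hC₁a), fun x hC1 hC0 => ?_⟩
  have hxU : x ∈ U := by
    have : R + 1 ≤ ‖x‖ := le_trans (le_max_right _ _) hC1
    show R < ‖x‖
    linarith
  obtain ⟨hx0, hxV⟩ := hzU x hxU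
  have hxa : C₁a ≤ ‖x‖ := le_trans (le_trans (le_max_left _ _) (le_max_left _ _)) hC1
  have hxb : C₁b ≤ ‖x‖ := le_trans (le_trans (le_max_right _ _) (le_max_left _ _)) hC1
  have hia : C₀a ≤ x i := le_trans (le_max_left _ _) hC0
  have hib : C₀b ≤ x i := le_trans (le_max_right _ _) hC0
  constructor
  · have hdg : DifferentiableAt ℝ g (iot x) :=
      (hgsm.contDiffAt (hVopen.mem_nhds hxV)).differentiableAt (by simp)
    rw [partialDeriv'_congr hUopen hxU hveq i, partialDeriv'_Phi i hx0 hdg]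
    exact (hA x hxa hia).2
  · have hdh : DifferentiableAt ℝ hfun (iot x) :=
      (hhsm.contDiffAt (hVopen.mem_nhds hxV)).differentiableAt (by simp)
    rw [partialDeriv'_congr hUopen hxU hweq i, partialDeriv'_Phi i hx0 hdh]
    exact (hB x hxb hib).2
end
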